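/- arXiv:1112.3546 — 13 statements merged into one kernel-verified Lean document; each statement's English description precedes it below -/
import Mathlib

section
/- Let Φ be a max-plus eigenvector of A with eigenvalue 0 and let c be a cycle of length m ≥ 1. Then the following are equivalent: (i) every edge (c t, c (t+1)) for t = 0, …, m−1 is saturated for Φ; (ii) the total weight of c equals 0 (in WithBot ℝ). In other words, the cycles of the saturation graph of Φ are precisely the cycles of total weight 0, i.e. the critical cycles. -/
/-- For a max-plus eigenvector `Φ` of `A` with eigenvalue `0` and a cycle `c`,
all edges of the cycle are saturated for `Φ` iff the total weight of the cycle equals `0`: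
the cycles of the saturation graph are precisely the critical cycles. -/
theorem stmt_2 (n : ℕ) (hn : 0 < n) (A : Fin n → Fin n → WithBot ℝ) (Φ : Fin n → ℝ)
    (hΦ : ∀ i : Fin n,
      (Finset.univ.sup fun j : Fin n => A i j + (Φ j : WithBot ℝ)) = (Φ i : WithBot ℝ))
    (m : ℕ) (hm : 1 ≤ m) (c : Fin (m + 1) → Fin n) (hc : c 0 = c (Fin.last m)) :
    (∀ t : Fin m,
        A (c t.castSucc) (c t.succ) + (Φ (c t.succ) : WithBot ℝ) = (Φ (c t.castSucc) : WithBot ℝ))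
      ↔ (∑ t : Fin m, A (c t.castSucc) (c t.succ)) = (0 : WithBot ℝ) := by
  -- auxiliary: telescoping sum
  set G : ℕ → ℝ := fun k => Φ (c ⟨min k m, by omega⟩) with hG
  have htel : ∑ t : Fin m, (Φ (c t.castSucc) - Φ (c t.succ)) = 0 := by
    have h1 : ∀ t : Fin m, Φ (c t.castSucc) - Φ (c t.succ) = G t - G (t + 1) := by
      intro t
      have ht : (t : ℕ) < m := t.isLt
      have e1 : (⟨min (t : ℕ) m, by omega⟩ : Fin (m + 1)) = t.castSucc := by
        ext; simp [Nat.min_eq_left (le_of_lt ht)]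
      have e2 : (⟨min ((t : ℕ) + 1) m, by omega⟩ : Fin (m + 1)) = t.succ := by
        ext; simp [Nat.min_eq_left ht]
      simp only [hG]
      rw [e1, e2]
    calc ∑ t : Fin m, (Φ (c t.castSucc) - Φ (c t.succ))
        = ∑ t : Fin m, (G t - G ((t : ℕ) + 1)) := by
          exact Finset.sum_congr rfl fun t _ => h1 t
      _ = ∑ k ∈ Finset.range m, (G k - G (k + 1)) :=
          Fin.sum_univ_eq_sum_range (fun k => G k - G (k + 1)) m
      _ = G 0 - G m := Finset.sum_range_sub' G m
      _ = 0 := by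
          have e0 : (⟨min 0 m, by omega⟩ : Fin (m + 1)) = 0 := by ext; simp
          have em : (⟨min m m, by omega⟩ : Fin (m + 1)) = Fin.last m := by ext; simp
          simp only [hG, e0, em, hc, sub_self]
  have hle : ∀ t : Fin m,
      A (c t.castSucc) (c t.succ) + (Φ (c t.succ) : WithBot ℝ) ≤ (Φ (c t.castSucc) : WithBot ℝ) :=
    fun t => (hΦ (c t.castSucc)) ▸ Finset.le_sup (f := fun j => A (c t.castSucc) j + (Φ j : WithBot ℝ))
      (Finset.mem_univ (c t.succ))
  constructor
  · intro hsat
    have hval : ∀ t : Fin m,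
        A (c t.castSucc) (c t.succ) = ((Φ (c t.castSucc) - Φ (c t.succ) : ℝ) : WithBot ℝ) := by
      intro t
      have h := hsat t
      cases hA : A (c t.castSucc) (c t.succ) with
      | bot => rw [hA] at h; simp at h
      | coe a =>
        rw [hA] at h
        rw [← WithBot.coe_add] at h
        have : a + Φ (c t.succ) = Φ (c t.castSucc) := WithBot.coe_injective h
        rw [show a = Φ (c t.castSucc) - Φ (c t.succ) by linarith]
    calc ∑ t : Fin m, A (c t.castSucc) (c t.succ)
        = ∑ t : Fin m, ((Φ (c t.castSucc) - Φ (c t.succ) : ℝ) : WithBot ℝ) :=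
          Finset.sum_congr rfl fun t _ => hval t
      _ = ((∑ t : Fin m, (Φ (c t.castSucc) - Φ (c t.succ)) : ℝ) : WithBot ℝ) :=
          (WithBot.coe_sum _ _).symm
      _ = (0 : WithBot ℝ) := by rw [htel]; rfl
  · intro hsum t
    -- all entries are finite
    have hne : ∀ s : Fin m, A (c s.castSucc) (c s.succ) ≠ ⊥ := by
      intro s hbot
      have : (∑ t : Fin m, A (c t.castSucc) (c t.succ)) = ⊥ :=
        WithBot.sum_eq_bot_iff.2 ⟨s, Finset.mem_univ s, hbot⟩
      rw [hsum] at this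
      exact (WithBot.coe_ne_bot (a := (0:ℝ))) (by exact_mod_cast this)
    choose a ha using fun s => WithBot.ne_bot_iff_exists.1 (hne s)
    have hale : ∀ s : Fin m, a s ≤ Φ (c s.castSucc) - Φ (c s.succ) := by
      intro s
      have := hle s
      rw [← ha s, ← WithBot.coe_add, WithBot.coe_le_coe] at this
      linarith
    have hsuma : ∑ s : Fin m, a s = 0 := by
      have : ((∑ s : Fin m, a s : ℝ) : WithBot ℝ) = ((0 : ℝ) : WithBot ℝ) := by
        rw [WithBot.coe_sum]
        simp only [ha]
        exact hsum
      exact_mod_cast this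
    have heq : ∀ s ∈ Finset.univ, a s = Φ (c s.castSucc) - Φ (c s.succ) :=
      (Finset.sum_eq_sum_iff_of_le (fun s _ => hale s)).1 (by rw [hsuma, htel])
    have := heq t (Finset.mem_univ t)
    rw [← ha t, ← WithBot.coe_add, this]
    norm_num
end

section
/- Assume (AU) with bound N, and let S ∈ ℝ be the greatest value of u (i−1) + u i, i.e. u (i−1) + u i ≤ S for all i ∈ ℤ and S = u (i₀−1) + u i₀ for some i₀ (such S exists under (AU)). Then the greatest total weight of the two-cycles of the associated max-plus matrices equals min S 1 − k; explicitly: (γ i − k) + γ (i+1) ≤ min S 1 − k for all i ∈ ℤ, with equality for some i, and likewise (δ i − k) + δ (i+1) ≤ min S 1 − k for all i ∈ ℤ, with equality for some i. -/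
/-- `γ i = min (u i) (1 - u (i-1))`. -/
noncomputable def gam (u : ℤ → ℝ) (i : ℤ) : ℝ := min (u i) (1 - u (i - 1))

/-- `δ i = min (u (i-1)) (1 - u i)`. -/
noncomputable def del (u : ℤ → ℝ) (i : ℤ) : ℝ := min (u (i - 1)) (1 - u i)

/-- Under (AU), with `S` the greatest value of `u (i-1) + u i`, the greatest total
weight of the two-cycles of the associated max-plus matrices `A(γ)` and `A(δ)` equals
`min S 1 - k`. -/
theorem stmt_3 (u : ℤ → ℝ) (hu : ∀ i : ℤ, 0 ≤ u i ∧ u i ≤ 1) (k : ℝ)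
    (N : ℕ) (hN : 0 < N) (hAU : ∀ i : ℤ, ((N : ℤ) ≤ i ∨ i ≤ -(N : ℤ)) → u i = 0)
    (S : ℝ) (hS : ∀ i : ℤ, u (i - 1) + u i ≤ S) (hS' : ∃ i₀ : ℤ, S = u (i₀ - 1) + u i₀) :
    (∀ i : ℤ, (gam u i - k) + gam u (i + 1) ≤ min S 1 - k) ∧
    (∃ i : ℤ, (gam u i - k) + gam u (i + 1) = min S 1 - k) ∧
    (∀ i : ℤ, (del u i - k) + del u (i + 1) ≤ min S 1 - k) ∧
    (∃ i : ℤ, (del u i - k) + del u (i + 1) = min S 1 - k) := by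
  classical
  obtain ⟨i₀, hi₀⟩ := hS'
  refine ⟨?_, ?_, ?_, ?_⟩
  · intro i
    have e : i + 1 - 1 = i := by ring
    have g1 : gam u i ≤ u i := min_le_left _ _
    have g2 : gam u (i+1) ≤ u (i+1) := min_le_left _ _
    have g3 : gam u (i+1) ≤ 1 - u i := by
      rw [gam, e]; exact min_le_right _ _
    have hs := hS (i+1); rw [e] at hs
    have hm : gam u i + gam u (i+1) ≤ min S 1 := le_min (by linarith) (by linarith)
    linarith
  · by_cases hS1 : S ≤ 1
    · refine ⟨i₀ - 1, ?_⟩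
      have e1 : i₀ - 1 + 1 = i₀ := by ring
      have hs1 := hS (i₀ - 1)
      have h1 : gam u (i₀ - 1) = u (i₀ - 1) := by
        rw [gam]; exact min_eq_left (by linarith)
      have h2 : gam u i₀ = u i₀ := by
        rw [gam]; exact min_eq_left (by linarith)
      have hm : min S 1 = S := min_eq_left hS1
      rw [e1, h1, h2, hm]; linarith
    · push_neg at hS1
      have hbd : ∀ j : ℤ, 1 ≤ u (j - 1) + u j → -(N:ℤ) + 1 ≤ j := by
        intro j hj
        by_contra h
        push_neg at h
        have hj1 : j ≤ -(N:ℤ) := by omega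
        have z1 : u (j - 1) = 0 := hAU _ (Or.inr (by omega))
        have z2 : u j = 0 := hAU _ (Or.inr hj1)
        rw [z1, z2] at hj; linarith
      obtain ⟨j, hj, hjmin⟩ := Int.exists_least_of_bdd
        (P := fun j => 1 ≤ u (j - 1) + u j) ⟨-(N:ℤ) + 1, hbd⟩
        ⟨i₀, by show 1 ≤ u (i₀ - 1) + u i₀; linarith⟩
      refine ⟨j - 1, ?_⟩
      have e1 : j - 1 + 1 = j := by ring
      have hprev : ¬ (1 ≤ u (j - 1 - 1) + u (j - 1)) := by
        intro h
        have := hjmin _ h; omega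
      push_neg at hprev
      have h1 : gam u (j - 1) = u (j - 1) := by
        rw [gam]; exact min_eq_left (by linarith)
      have h2 : gam u j = 1 - u (j - 1) := by
        rw [gam]; exact min_eq_right (by linarith)
      have hm : min S 1 = 1 := min_eq_right (le_of_lt hS1)
      rw [e1, h1, h2, hm]; ring
  · intro i
    have e : i + 1 - 1 = i := by ring
    have d1 : del u i ≤ u (i - 1) := min_le_left _ _
    have d2 : del u i ≤ 1 - u i := min_le_right _ _
    have d3 : del u (i+1) ≤ u i := by
      rw [del, e]; exact min_le_left _ _
    have hs := hS i
    have hm : del u i + del u (i+1) ≤ min S 1 := le_min (by linarith) (by linarith)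
    linarith
  · by_cases hS1 : S ≤ 1
    · refine ⟨i₀, ?_⟩
      have e1 : i₀ + 1 - 1 = i₀ := by ring
      have hs1 := hS (i₀ + 1); rw [e1] at hs1
      have h1 : del u i₀ = u (i₀ - 1) := by
        rw [del]; exact min_eq_left (by linarith)
      have h2 : del u (i₀ + 1) = u i₀ := by
        rw [del, e1]; exact min_eq_left (by linarith)
      have hm : min S 1 = S := min_eq_left hS1
      rw [h1, h2, hm]; linarith
    · push_neg at hS1
      have hbd : ∀ j : ℤ, 1 ≤ u (j - 1) + u j → j ≤ (N:ℤ) := by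
        intro j hj
        by_contra h
        push_neg at h
        have z1 : u (j - 1) = 0 := hAU _ (Or.inl (by omega))
        have z2 : u j = 0 := hAU _ (Or.inl (by omega))
        rw [z1, z2] at hj; linarith
      obtain ⟨j, hj, hjmax⟩ := Int.exists_greatest_of_bdd
        (P := fun j => 1 ≤ u (j - 1) + u j) ⟨(N:ℤ), hbd⟩
        ⟨i₀, by show 1 ≤ u (i₀ - 1) + u i₀; linarith⟩
      refine ⟨j, ?_⟩
      have e1 : j + 1 - 1 = j := by ring
      have hnext : ¬ (1 ≤ u (j + 1 - 1) + u (j + 1)) := by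
        intro h
        have := hjmax _ h; omega
      rw [e1] at hnext
      push_neg at hnext
      have h1 : del u j = 1 - u j := by
        rw [del]; exact min_eq_right (by linarith)
      have h2 : del u (j + 1) = u j := by
        rw [del, e1]; exact min_eq_left (by linarith)
      have hm : min S 1 = 1 := min_eq_right (le_of_lt hS1)
      rw [h1, h2, hm]; ring
end

section
/- Assume (AU) with bound N, and let Φ : ℤ → ℝ solve the γ-eigenproblem and satisfy (AΦ). Then Φ (i−1) = Φ i for all i ≥ N + 1, and Φ (i−1) = Φ i − k for all i ≤ −N (so Φ is constant on [N, ∞) and has slope k on (−∞, −N]). The same conclusion holds if instead Φ solves the δ-eigenproblem and satisfies (AΦ). -/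
/-- `Φ` solves the γ-eigenproblem. -/
def SolvesG (u : ℤ → ℝ) (k : ℝ) (Φ : ℤ → ℝ) : Prop :=
  ∀ i : ℤ, max (Φ (i + 1) + gam u i - k) (Φ (i - 1) + gam u i) = Φ i

/-- `Φ` solves the δ-eigenproblem. -/
def SolvesD (u : ℤ → ℝ) (k : ℝ) (Φ : ℤ → ℝ) : Prop :=
  ∀ i : ℤ, max (Φ (i + 1) + del u i - k) (Φ (i - 1) + del u i) = Φ i

/-- Condition (AΦ). -/
def APhi (k : ℝ) (Φ : ℤ → ℝ) : Prop :=
  ∀ M : ℤ, (∃ N' : ℤ, M ≤ N' ∧ Φ (N' + 1) = Φ N') ∧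
    (∃ N'' : ℤ, M ≤ N'' ∧ Φ (-N'' - 1) = Φ (-N'') - k)

lemma key (k : ℝ) (c Φ : ℤ → ℝ) (N : ℕ)
    (hc0 : ∀ i, 0 ≤ c i)
    (hct : ∀ i : ℤ, ((N : ℤ) + 1 ≤ i ∨ i ≤ -(N : ℤ)) → c i = 0)
    (hrec : ∀ i : ℤ, max (Φ (i + 1) + c i - k) (Φ (i - 1) + c i) = Φ i)
    (hA : APhi k Φ) :
    (∀ i : ℤ, (N : ℤ) + 1 ≤ i → Φ (i - 1) = Φ i) ∧
    (∀ i : ℤ, i ≤ -(N : ℤ) → Φ (i - 1) = Φ i - k) := by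
  have mono : ∀ i : ℤ, Φ (i - 1) + c i ≤ Φ i := by
    intro i; rw [← hrec i]; exact le_max_right _ _
  have step : ∀ i : ℤ, Φ (i + 1) + c i - k ≤ Φ i := by
    intro i; rw [← hrec i]; exact le_max_left _ _
  have hk0 : 0 ≤ k := by
    have h1 := mono 1
    have h2 := step 0
    have h3 := hc0 0; have h4 := hc0 1
    norm_num at h1 h2
    linarith
  rcases eq_or_lt_of_le hk0 with hk | hk
  · have hconst : ∀ i : ℤ, Φ (i - 1) = Φ i := by
      intro i
      have h1 := mono i
      have h2 := step (i - 1)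
      have e : i - 1 + 1 = i := by ring
      rw [e] at h2
      have h3 := hc0 i; have h4 := hc0 (i - 1)
      linarith
    exact ⟨fun i _ => hconst i, fun i _ => by rw [hconst i, ← hk, sub_zero]⟩
  · constructor
    · intro i hi
      by_contra hne
      have hlt : Φ (i - 1) < Φ i :=
        lt_of_le_of_ne (by have := mono i; have := hc0 i; linarith) hne
      have claim : ∀ j : ℤ, i ≤ j → Φ (j - 1) < Φ j := by
        refine Int.le_induction hlt ?_
        intro j hij ih
        have hc : c j = 0 := hct j (Or.inl (by omega))
        have hr := hrec j
        rw [hc] at hr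
        have hmax : max (Φ (j + 1) - k) (Φ (j - 1)) = Φ j := by
          convert hr using 2 <;> ring
        have e : j + 1 - 1 = j := by ring
        rw [e]
        rcases max_eq_iff.mp hmax with ⟨h1, _⟩ | ⟨h1, h2⟩
        · linarith
        · linarith
      obtain ⟨N', hN', heq⟩ := (hA i).1
      have h := claim (N' + 1) (by omega)
      have e : N' + 1 - 1 = N' := by ring
      rw [e] at h
      linarith
    · intro i hi
      by_contra hne
      have hge : Φ i - k ≤ Φ (i - 1) := by
        have h := step (i - 1)
        have e : i - 1 + 1 = i := by ring
        rw [e] at h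
        have := hc0 (i - 1); linarith
      have hlt : Φ i - k < Φ (i - 1) := lt_of_le_of_ne hge (Ne.symm hne)
      have claim : ∀ j : ℤ, j ≤ i → Φ j - k < Φ (j - 1) := by
        refine Int.le_induction_down hlt ?_
        intro j hij ih
        have hc : c (j - 1) = 0 := hct (j - 1) (Or.inr (by omega))
        have hr := hrec (j - 1)
        rw [hc] at hr
        have e1 : j - 1 + 1 = j := by ring
        rw [e1] at hr
        have hmax : max (Φ j - k) (Φ (j - 1 - 1)) = Φ (j - 1) := by
          convert hr using 2 <;> ring
        rcases max_eq_iff.mp hmax with ⟨h1, _⟩ | ⟨h1, _⟩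
        · linarith
        · linarith
      have const : ∀ j : ℤ, j ≤ i → Φ (j - 1 - 1) = Φ (j - 1) := by
        intro j hj
        have hcl := claim j hj
        have hc : c (j - 1) = 0 := hct (j - 1) (Or.inr (by omega))
        have hr := hrec (j - 1)
        rw [hc] at hr
        have e1 : j - 1 + 1 = j := by ring
        rw [e1] at hr
        have hmax : max (Φ j - k) (Φ (j - 1 - 1)) = Φ (j - 1) := by
          convert hr using 2 <;> ring
        rcases max_eq_iff.mp hmax with ⟨h1, _⟩ | ⟨h1, _⟩
        · linarith
        · exact h1
      obtain ⟨N'', hN'', heq⟩ := (hA (1 - i)).2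
      have h := const (-N'' + 1) (by omega)
      have e1 : -N'' + 1 - 1 - 1 = -N'' - 1 := by ring
      have e2 : -N'' + 1 - 1 = -N'' := by ring
      rw [e1, e2] at h
      linarith

/-- Under (AU), a solution of the γ-eigenproblem (resp. δ-eigenproblem)
satisfying (AΦ) is constant on `[N, ∞)` and has slope `k` on `(-∞, -N]`. -/
theorem stmt_4 (u : ℤ → ℝ) (hu : ∀ i : ℤ, 0 ≤ u i ∧ u i ≤ 1) (k : ℝ)
    (N : ℕ) (hN : 0 < N) (hAU : ∀ i : ℤ, ((N : ℤ) ≤ i ∨ i ≤ -(N : ℤ)) → u i = 0) :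
    (∀ Φ : ℤ → ℝ, SolvesG u k Φ → APhi k Φ →
      (∀ i : ℤ, (N : ℤ) + 1 ≤ i → Φ (i - 1) = Φ i) ∧
      (∀ i : ℤ, i ≤ -(N : ℤ) → Φ (i - 1) = Φ i - k)) ∧
    (∀ Φ : ℤ → ℝ, SolvesD u k Φ → APhi k Φ →
      (∀ i : ℤ, (N : ℤ) + 1 ≤ i → Φ (i - 1) = Φ i) ∧
      (∀ i : ℤ, i ≤ -(N : ℤ) → Φ (i - 1) = Φ i - k)) := by
  have hG : ∀ i : ℤ, 0 ≤ gam u i := fun i =>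
    le_min (hu i).1 (by linarith [(hu (i - 1)).2])
  have hD : ∀ i : ℤ, 0 ≤ del u i := fun i =>
    le_min (hu (i - 1)).1 (by linarith [(hu i).2])
  have hGt : ∀ i : ℤ, ((N : ℤ) + 1 ≤ i ∨ i ≤ -(N : ℤ)) → gam u i = 0 := by
    intro i hi
    have hui : u i = 0 := hAU i (by omega)
    unfold gam
    rw [hui]
    exact min_eq_left (by linarith [(hu (i - 1)).2])
  have hDt : ∀ i : ℤ, ((N : ℤ) + 1 ≤ i ∨ i ≤ -(N : ℤ)) → del u i = 0 := by
    intro i hi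
    have hui : u (i - 1) = 0 := hAU (i - 1) (by omega)
    unfold del
    rw [hui]
    exact min_eq_left (by linarith [(hu i).2])
  exact ⟨fun Φ hs hA => key k (gam u) Φ N hG hGt hs hA,
    fun Φ hs hA => key k (del u) Φ N hD hDt hs hA⟩
end

section
/- Assume (AU) with bound N, and let Φ : ℤ → ℝ solve the γ-eigenproblem and satisfy (AΦ). Then in the restriction of the saturation graph to any interval [−N−l, N+l] with l ≥ 1 every node has an outgoing edge: for every integer l ≥ 1 and every i with −N−l ≤ i ≤ N+l, either (i+1 ≤ N+l and Φ (i+1) + γ i − k = Φ i) or (i−1 ≥ −N−l and Φ (i−1) + γ i = Φ i). The same holds with δ in place of γ. -/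
/-- The eigenproblem with an arbitrary coefficient `c`; for `c = gam u` and `c = del u` it is
`SolvesG u k` and `SolvesD u k`. -/
def SolvesEigen (c : ℤ → ℝ) (k : ℝ) (Φ : ℤ → ℝ) : Prop :=
  ∀ i : ℤ, max (Φ (i + 1) + c i - k) (Φ (i - 1) + c i) = Φ i

namespace SolvesEigen

variable {c : ℤ → ℝ} {k : ℝ} {Φ : ℤ → ℝ}

lemma forward_le (hΦ : SolvesEigen c k Φ) (i : ℤ) : Φ (i + 1) + c i - k ≤ Φ i :=
  hΦ i ▸ le_max_left _ _

lemma backward_le (hΦ : SolvesEigen c k Φ) (i : ℤ) : Φ (i - 1) + c i ≤ Φ i :=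
  hΦ i ▸ le_max_right _ _

lemma forward_or_backward (hΦ : SolvesEigen c k Φ) (i : ℤ) :
    Φ (i + 1) + c i - k = Φ i ∨ Φ (i - 1) + c i = Φ i := by
  rcases max_choice (Φ (i + 1) + c i - k) (Φ (i - 1) + c i) with h | h <;> rw [← hΦ i, h]
  exacts [.inl rfl, .inr rfl]

lemma forward_eq_of_lt (hΦ : SolvesEigen c k Φ) {j : ℤ} (hc : c j = 0)
    (hlt : Φ (j - 1) < Φ j) : Φ (j + 1) = Φ j + k := by
  have := hΦ j
  rw [hc, add_zero, add_zero, max_eq_iff] at this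
  rcases this with ⟨h, -⟩ | ⟨h, -⟩
  · linarith
  · exact absurd h hlt.ne

lemma backward_eq_of_right_boundary (hΦ : SolvesEigen c k Φ) {b : ℤ} (hc : 0 ≤ c (b - 1))
    (hzero : ∀ j, b ≤ j → c j = 0) (hA : ∀ M : ℤ, ∃ n, M ≤ n ∧ Φ (n + 1) = Φ n) :
    Φ (b - 1) + c b = Φ b := by
  rw [hzero b le_rfl, add_zero]
  refine le_antisymm (by simpa [hzero b le_rfl] using hΦ.backward_le b) (not_lt.1 fun hlt => ?_)
  rcases le_or_gt k 0 with hk | hk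
  · have := hΦ.forward_le (b - 1)
    rw [sub_add_cancel] at this
    linarith
  · have increasing : ∀ j, b ≤ j → Φ j < Φ (j + 1) := by
      intro j hj
      induction j, hj using Int.leInduction with
      | base => linarith [hΦ.forward_eq_of_lt (hzero b le_rfl) hlt]
      | succ j hj ih =>
        have := hΦ.forward_eq_of_lt (j := j + 1) (hzero _ (by omega)) (by simpa using ih)
        linarith
    obtain ⟨n, hn, hflat⟩ := hA b
    exact (increasing n hn).ne' hflat

/-- Reflecting `Φ` through the origin turns forward edges into backward ones; the tilt `k * j`
compensates for the cost `k` being charged on forward edges only. -/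
lemma reflect (hΦ : SolvesEigen c k Φ) :
    SolvesEigen (fun j => c (-j)) k (fun j => Φ (-j) + k * j) := by
  intro j
  have h := hΦ (-j)
  rw [max_comm, show -j - 1 = -(j + 1) by ring, show -j + 1 = -(j - 1) by ring] at h
  show max _ _ = Φ (-j) + k * j
  rw [← h, ← max_add_add_right]
  congr 1 <;> push_cast <;> ring

lemma forward_eq_of_left_boundary (hΦ : SolvesEigen c k Φ) {a : ℤ} (hc : 0 ≤ c (a + 1))
    (hzero : ∀ j, j ≤ a → c j = 0) (hA : ∀ M : ℤ, ∃ n, M ≤ n ∧ Φ (-n - 1) = Φ (-n) - k) :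
    Φ (a + 1) + c a - k = Φ a := by
  have h := hΦ.reflect.backward_eq_of_right_boundary (b := -a)
    (by rwa [neg_sub, sub_neg_eq_add, add_comm]) (fun j hj => hzero _ (by omega)) fun M => ?_
  · simp only [neg_sub, sub_neg_eq_add, neg_neg, add_comm 1 a] at h
    push_cast at h
    linarith
  · obtain ⟨n, hn, h⟩ := hA M
    refine ⟨n, hn, ?_⟩
    rw [neg_add', h]
    push_cast
    ring

lemma exists_saturated_edge (hΦ : SolvesEigen c k Φ) (hA : APhi k Φ) (hc : ∀ i, 0 ≤ c i)
    {a b : ℤ} (hab : a < b) (hb : ∀ j, b ≤ j → c j = 0) (ha : ∀ j, j ≤ a → c j = 0)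
    {i : ℤ} (hai : a ≤ i) (hib : i ≤ b) :
    (i + 1 ≤ b ∧ Φ (i + 1) + c i - k = Φ i) ∨ (a ≤ i - 1 ∧ Φ (i - 1) + c i = Φ i) := by
  rcases eq_or_lt_of_le hib with rfl | hib
  · exact .inr ⟨by omega, hΦ.backward_eq_of_right_boundary (hc _) hb fun M => (hA M).1⟩
  rcases eq_or_lt_of_le hai with rfl | hai
  · exact .inl ⟨by omega, hΦ.forward_eq_of_left_boundary (hc _) ha fun M => (hA M).2⟩
  exact (hΦ.forward_or_backward i).imp (⟨by omega, ·⟩) (⟨by omega, ·⟩)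

end SolvesEigen

section Coefficients

variable {u : ℤ → ℝ} {i : ℤ}

lemma gam_nonneg (h0 : 0 ≤ u i) (h1 : u (i - 1) ≤ 1) : 0 ≤ gam u i :=
  le_min h0 (by linarith)

lemma gam_eq_zero (h0 : u i = 0) (h1 : u (i - 1) ≤ 1) : gam u i = 0 := by
  rw [gam, h0]
  exact min_eq_left (by linarith)

lemma del_nonneg (h0 : 0 ≤ u (i - 1)) (h1 : u i ≤ 1) : 0 ≤ del u i :=
  le_min h0 (by linarith)

lemma del_eq_zero (h0 : u (i - 1) = 0) (h1 : u i ≤ 1) : del u i = 0 := by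
  rw [del, h0]
  exact min_eq_left (by linarith)

end Coefficients

theorem stmt_5_general (u : ℤ → ℝ) (hu : ∀ i : ℤ, 0 ≤ u i ∧ u i ≤ 1) (k : ℝ)
    (N : ℕ) (hAU : ∀ i : ℤ, ((N : ℤ) ≤ i ∨ i ≤ -(N : ℤ)) → u i = 0) :
    (∀ Φ : ℤ → ℝ, SolvesG u k Φ → APhi k Φ →
      ∀ l : ℤ, 1 ≤ l → ∀ i : ℤ, -(N : ℤ) - l ≤ i → i ≤ (N : ℤ) + l →
        (i + 1 ≤ (N : ℤ) + l ∧ Φ (i + 1) + gam u i - k = Φ i) ∨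
        (-(N : ℤ) - l ≤ i - 1 ∧ Φ (i - 1) + gam u i = Φ i)) ∧
    (∀ Φ : ℤ → ℝ, SolvesD u k Φ → APhi k Φ →
      ∀ l : ℤ, 1 ≤ l → ∀ i : ℤ, -(N : ℤ) - l ≤ i → i ≤ (N : ℤ) + l →
        (i + 1 ≤ (N : ℤ) + l ∧ Φ (i + 1) + del u i - k = Φ i) ∨
        (-(N : ℤ) - l ≤ i - 1 ∧ Φ (i - 1) + del u i = Φ i)) := by
  constructor
  · intro Φ hΦ hA l hl i hai hib
    exact SolvesEigen.exists_saturated_edge hΦ hA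
      (fun j => gam_nonneg (hu j).1 (hu _).2) (by omega)
      (fun j hj => gam_eq_zero (hAU j (.inl (by omega))) (hu _).2)
      (fun j hj => gam_eq_zero (hAU j (.inr (by omega))) (hu _).2) hai hib
  · intro Φ hΦ hA l hl i hai hib
    exact SolvesEigen.exists_saturated_edge hΦ hA
      (fun j => del_nonneg (hu _).1 (hu j).2) (by omega)
      (fun j hj => del_eq_zero (hAU _ (.inl (by omega))) (hu j).2)
      (fun j hj => del_eq_zero (hAU _ (.inr (by omega))) (hu j).2) hai hib

/-- In the restriction of the saturation graph to any interval `[-N-l, N+l]`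
with `l ≥ 1`, every node has an outgoing edge; both for the γ- and the δ-eigenproblem. -/
theorem stmt_5 (u : ℤ → ℝ) (hu : ∀ i : ℤ, 0 ≤ u i ∧ u i ≤ 1) (k : ℝ)
    (N : ℕ) (hN : 0 < N) (hAU : ∀ i : ℤ, ((N : ℤ) ≤ i ∨ i ≤ -(N : ℤ)) → u i = 0) :
    (∀ Φ : ℤ → ℝ, SolvesG u k Φ → APhi k Φ →
      ∀ l : ℤ, 1 ≤ l → ∀ i : ℤ, -(N : ℤ) - l ≤ i → i ≤ (N : ℤ) + l →
        (i + 1 ≤ (N : ℤ) + l ∧ Φ (i + 1) + gam u i - k = Φ i) ∨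
        (-(N : ℤ) - l ≤ i - 1 ∧ Φ (i - 1) + gam u i = Φ i)) ∧
    (∀ Φ : ℤ → ℝ, SolvesD u k Φ → APhi k Φ →
      ∀ l : ℤ, 1 ≤ l → ∀ i : ℤ, -(N : ℤ) - l ≤ i → i ≤ (N : ℤ) + l →
        (i + 1 ≤ (N : ℤ) + l ∧ Φ (i + 1) + del u i - k = Φ i) ∨
        (-(N : ℤ) - l ≤ i - 1 ∧ Φ (i - 1) + del u i = Φ i)) :=
  stmt_5_general u hu k N hAU
end

section
/- Assume (AU) with bound N, and let S ∈ ℝ be the greatest value of u (i−1) + u i, i.e. u (i−1) + u i ≤ S for all i ∈ ℤ and S = u (i₀−1) + u i₀ for some i₀ (such S exists under (AU)). If some Φ : ℤ → ℝ solves the γ-eigenproblem and satisfies (AΦ), then necessarily k = min S 1. The same conclusion holds if some Φ solves the δ-eigenproblem and satisfies (AΦ). -/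
/-- Key abstract lemma: if `g` is nonnegative, `g i + g (i+1) ≤ m` with equality somewhere,
and `Φ` solves the eigenproblem with potential increment `g` and satisfies (AΦ), then `k = m`. -/
lemma key_lemma (g : ℤ → ℝ) (m k : ℝ) (Φ : ℤ → ℝ)
    (hg0 : ∀ i, 0 ≤ g i)
    (hle : ∀ i, g i + g (i + 1) ≤ m)
    (heq : ∃ i, g i + g (i + 1) = m)
    (hΦ : ∀ i : ℤ, max (Φ (i + 1) + g i - k) (Φ (i - 1) + g i) = Φ i)
    (hA : APhi k Φ) : k = m := by
  have h1 : ∀ i, Φ (i + 1) + g i - k ≤ Φ i := fun i => (hΦ i) ▸ le_max_left _ _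
  have h2 : ∀ i, Φ (i - 1) + g i ≤ Φ i := fun i => (hΦ i) ▸ le_max_right _ _
  have h3 : ∀ i, g i < Φ i - Φ (i - 1) → Φ (i + 1) = Φ i + k - g i := by
    intro i hi
    rcases max_choice (Φ (i + 1) + g i - k) (Φ (i - 1) + g i) with he | he <;>
      rw [hΦ i] at he <;> linarith
  obtain ⟨i₀, hi₀⟩ := heq
  have hgm : ∀ i, g i ≤ m := fun i => by
    have := hg0 (i + 1); have := hle i; linarith
  have hm0 : 0 ≤ m := le_trans (hg0 i₀) (hgm i₀)
  -- lower bound : m ≤ k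
  have hkm : m ≤ k := by
    have a := h1 i₀
    have b := h2 (i₀ + 1)
    have e : i₀ + 1 - 1 = i₀ := by ring
    rw [e] at b
    linarith
  -- upper bound by contradiction
  by_contra hne
  have hk : m < k := lt_of_le_of_ne hkm (fun h => hne h.symm)
  obtain ⟨⟨N', hN'1, hN'2⟩, ⟨N'', hN''1, hN''2⟩⟩ := hA 0
  have key : ∀ n : ℕ, g (-N'' + n) < Φ (-N'' + n) - Φ (-N'' + n - 1) := by
    intro n
    induction n with
    | zero =>
      have e1 : (-N'' + ((0 : ℕ) : ℤ)) = -N'' := by norm_num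
      rw [e1, hN''2]
      have := hgm (-N'')
      linarith
    | succ n ih =>
      have hstep := h3 (-N'' + n) ih
      have e1 : (-N'' + ((n + 1 : ℕ) : ℤ)) = (-N'' + n) + 1 := by push_cast; ring
      have e2 : ((-N'' + n) + 1) - 1 = -N'' + n := by ring
      rw [e1, e2, hstep]
      have := hle (-N'' + n)
      linarith
  have hn : (0 : ℤ) ≤ N' + N'' + 1 := by linarith
  have := key (N' + N'' + 1).toNat
  rw [Int.toNat_of_nonneg hn] at this
  have e1 : (-N'' + (N' + N'' + 1)) = N' + 1 := by ring
  have e2 : (N' + 1) - 1 = N' := by ring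
  rw [e1, e2, hN'2] at this
  have := hg0 (N' + 1)
  linarith

/-- Under (AU), if the γ-eigenproblem (resp. the δ-eigenproblem) has a solution
satisfying (AΦ), then necessarily `k = min S 1`, where `S` is the greatest value of
`u (i-1) + u i`. -/
theorem stmt_6 (u : ℤ → ℝ) (hu : ∀ i : ℤ, 0 ≤ u i ∧ u i ≤ 1) (k : ℝ)
    (N : ℕ) (hN : 0 < N) (hAU : ∀ i : ℤ, ((N : ℤ) ≤ i ∨ i ≤ -(N : ℤ)) → u i = 0)
    (S : ℝ) (hS : ∀ i : ℤ, u (i - 1) + u i ≤ S) (hS' : ∃ i₀ : ℤ, S = u (i₀ - 1) + u i₀) :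
    ((∃ Φ : ℤ → ℝ, SolvesG u k Φ ∧ APhi k Φ) → k = min S 1) ∧
    ((∃ Φ : ℤ → ℝ, SolvesD u k Φ ∧ APhi k Φ) → k = min S 1) := by
  obtain ⟨i₀, hi₀⟩ := hS'
  -- basic facts
  have hg0 : ∀ i, 0 ≤ gam u i :=
    fun i => le_min (hu i).1 (by linarith [(hu (i - 1)).2])
  have hd0 : ∀ i, 0 ≤ del u i :=
    fun i => le_min (hu (i - 1)).1 (by linarith [(hu i).2])
  -- upper bounds
  have hgle : ∀ i, gam u i + gam u (i + 1) ≤ min S 1 := by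
    intro i
    have e : (i + 1 : ℤ) - 1 = i := by ring
    have a1 : gam u i ≤ u i := min_le_left _ _
    have a2 : gam u (i + 1) ≤ u (i + 1) := min_le_left _ _
    have a3 : gam u (i + 1) ≤ 1 - u i := by
      unfold gam; rw [e]; exact min_le_right _ _
    have hSi := hS (i + 1); rw [e] at hSi
    exact le_min (by linarith) (by linarith)
  have hdle : ∀ i, del u i + del u (i + 1) ≤ min S 1 := by
    intro i
    have e : (i + 1 : ℤ) - 1 = i := by ring
    have a1 : del u i ≤ u (i - 1) := min_le_left _ _
    have a2 : del u (i + 1) ≤ u i := by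
      unfold del; rw [e]; exact min_le_left _ _
    have a3 : del u i ≤ 1 - u i := min_le_right _ _
    have hSi := hS i
    exact le_min (by linarith) (by linarith)
  -- attainment
  by_cases hS1 : S ≤ 1
  · have hmin : min S 1 = S := min_eq_left hS1
    have hgeq : ∃ i, gam u i + gam u (i + 1) = min S 1 := by
      refine ⟨i₀ - 1, ?_⟩
      have e : (i₀ - 1 : ℤ) + 1 = i₀ := by ring
      rw [e, hmin]
      have h1 : gam u (i₀ - 1) = u (i₀ - 1) := by
        apply min_eq_left
        have := hS (i₀ - 1)
        linarith
      have h2 : gam u i₀ = u i₀ := by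
        apply min_eq_left
        linarith [hi₀]
      rw [h1, h2, hi₀]
    have hdeq : ∃ i, del u i + del u (i + 1) = min S 1 := by
      refine ⟨i₀, ?_⟩
      rw [hmin]
      have h1 : del u i₀ = u (i₀ - 1) := by
        apply min_eq_left
        linarith [hi₀]
      have h2 : del u (i₀ + 1) = u i₀ := by
        have e : (i₀ + 1 : ℤ) - 1 = i₀ := by ring
        unfold del
        rw [e]
        apply min_eq_left
        have := hS (i₀ + 1); rw [e] at this
        linarith
      rw [h1, h2, hi₀]
    constructor
    · rintro ⟨Φ, hΦ, hA⟩
      exact key_lemma (gam u) (min S 1) k Φ hg0 hgle hgeq hΦ hA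
    · rintro ⟨Φ, hΦ, hA⟩
      exact key_lemma (del u) (min S 1) k Φ hd0 hdle hdeq hΦ hA
  · -- S > 1
    push_neg at hS1
    have hmin : min S 1 = 1 := min_eq_right (le_of_lt hS1)
    -- the set of i with u (i-1) + u i > 1 is nonempty and bounded
    have hP0 : (1 : ℝ) < u (i₀ - 1) + u i₀ := by linarith [hi₀]
    have hbdd_lo : ∀ z : ℤ, (1 : ℝ) < u (z - 1) + u z → -(N : ℤ) + 1 ≤ z := by
      intro z hz
      by_contra hc
      push_neg at hc
      have hz1 : z ≤ -(N : ℤ) := by omega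
      have h1 : u z = 0 := hAU z (Or.inr hz1)
      have h2 : u (z - 1) = 0 := hAU (z - 1) (Or.inr (by omega))
      rw [h1, h2] at hz; linarith
    have hbdd_hi : ∀ z : ℤ, (1 : ℝ) < u (z - 1) + u z → z ≤ (N : ℤ) := by
      intro z hz
      by_contra hc
      push_neg at hc
      have h1 : u z = 0 := hAU z (Or.inl (by omega))
      have h2 : u (z - 1) = 0 := hAU (z - 1) (Or.inl (by omega))
      rw [h1, h2] at hz; linarith
    classical
    -- least such i for gam
    obtain ⟨i₁, hi₁P, hi₁min⟩ := Int.exists_least_of_bdd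
      (P := fun z => (1 : ℝ) < u (z - 1) + u z)
      ⟨-(N : ℤ) + 1, hbdd_lo⟩ ⟨i₀, hP0⟩
    obtain ⟨i₂, hi₂P, hi₂max⟩ := Int.exists_greatest_of_bdd
      (P := fun z => (1 : ℝ) < u (z - 1) + u z)
      ⟨(N : ℤ), hbdd_hi⟩ ⟨i₀, hP0⟩
    have hgeq : ∃ i, gam u i + gam u (i + 1) = min S 1 := by
      refine ⟨i₁ - 1, ?_⟩
      have e : (i₁ - 1 : ℤ) + 1 = i₁ := by ring
      rw [e, hmin]
      have hprev : u (i₁ - 1 - 1) + u (i₁ - 1) ≤ 1 := by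
        by_contra hc
        push_neg at hc
        have := hi₁min (i₁ - 1) hc
        omega
      have h1 : gam u (i₁ - 1) = u (i₁ - 1) := min_eq_left (by linarith)
      have h2 : gam u i₁ = 1 - u (i₁ - 1) := min_eq_right (by linarith [hi₁P])
      rw [h1, h2]; ring
    have hdeq : ∃ i, del u i + del u (i + 1) = min S 1 := by
      refine ⟨i₂, ?_⟩
      rw [hmin]
      have hnext : u ((i₂ + 1) - 1) + u (i₂ + 1) ≤ 1 := by
        by_contra hc
        push_neg at hc
        have := hi₂max (i₂ + 1) hc
        omega
      have e : (i₂ + 1 : ℤ) - 1 = i₂ := by ring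
      rw [e] at hnext
      have h1 : del u i₂ = 1 - u i₂ := min_eq_right (by linarith [hi₂P])
      have h2 : del u (i₂ + 1) = u i₂ := by
        unfold del; rw [e]; exact min_eq_left (by linarith)
      rw [h1, h2]; ring
    constructor
    · rintro ⟨Φ, hΦ, hA⟩
      exact key_lemma (gam u) (min S 1) k Φ hg0 hgle hgeq hΦ hA
    · rintro ⟨Φ, hΦ, hA⟩
      exact key_lemma (del u) (min S 1) k Φ hd0 hdle hdeq hΦ hA
end

section
/- Assume (AU) with bound N and k ≥ 0. Let v : ℤ → ℝ satisfy the restricted γ-system on [−N−1, N+1]: v i = max (v (i+1) + γ i − k) (v (i−1) + γ i) for all −N ≤ i ≤ N, v (N+1) = v N + γ (N+1), and v (−N−1) = v (−N) + γ (−N−1) − k. Then there exists a unique Φ : ℤ → ℝ that solves the γ-eigenproblem, satisfies (AΦ), and agrees with v on [−N−1, N+1] (i.e. Φ i = v i for all −N−1 ≤ i ≤ N+1). The same holds with δ in place of γ throughout. -/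
/-- `v` satisfies the restricted γ-system on `[-N-1, N+1]`. -/
def RestrictedG (u : ℤ → ℝ) (k : ℝ) (N : ℕ) (v : ℤ → ℝ) : Prop :=
  (∀ i : ℤ, -(N : ℤ) ≤ i → i ≤ (N : ℤ) →
    v i = max (v (i + 1) + gam u i - k) (v (i - 1) + gam u i)) ∧
  v ((N : ℤ) + 1) = v (N : ℤ) + gam u ((N : ℤ) + 1) ∧
  v (-(N : ℤ) - 1) = v (-(N : ℤ)) + gam u (-(N : ℤ) - 1) - k

/-- `v` satisfies the restricted δ-system on `[-N-1, N+1]`. -/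
def RestrictedD (u : ℤ → ℝ) (k : ℝ) (N : ℕ) (v : ℤ → ℝ) : Prop :=
  (∀ i : ℤ, -(N : ℤ) ≤ i → i ≤ (N : ℤ) →
    v i = max (v (i + 1) + del u i - k) (v (i - 1) + del u i)) ∧
  v ((N : ℤ) + 1) = v (N : ℤ) + del u ((N : ℤ) + 1) ∧
  v (-(N : ℤ) - 1) = v (-(N : ℤ)) + del u (-(N : ℤ) - 1) - k

/-- Key extension lemma for an abstract coefficient `c` vanishing on the tails. -/
theorem key_unique_ext {c : ℤ → ℝ} {k : ℝ} {N : ℕ} {v : ℤ → ℝ} (hk : 0 ≤ k)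
    (hc : ∀ i : ℤ, ((N:ℤ)+1 ≤ i ∨ i ≤ -(N:ℤ)) → c i = 0)
    (hv : ∀ i : ℤ, -(N:ℤ) ≤ i → i ≤ (N:ℤ) →
      v i = max (v (i+1) + c i - k) (v (i-1) + c i))
    (hvr : v ((N:ℤ)+1) = v (N:ℤ) + c ((N:ℤ)+1))
    (hvl : v (-(N:ℤ)-1) = v (-(N:ℤ)) + c (-(N:ℤ)-1) - k) :
    ∃! Φ : ℤ → ℝ,
      (∀ i : ℤ, max (Φ (i+1) + c i - k) (Φ (i-1) + c i) = Φ i) ∧ APhi k Φ ∧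
      ∀ i : ℤ, -(N:ℤ)-1 ≤ i → i ≤ (N:ℤ)+1 → Φ i = v i := by
  classical
  set Φ₀ : ℤ → ℝ := fun i =>
    if (N:ℤ)+1 ≤ i then v ((N:ℤ)+1)
    else if i ≤ -(N:ℤ)-1 then v (-(N:ℤ)-1) + k * ((i:ℝ) + (N:ℝ) + 1)
    else v i with hΦ₀
  have hRr : ∀ i : ℤ, (N:ℤ)+1 ≤ i → Φ₀ i = v ((N:ℤ)+1) := by
    intro i h; simp only [hΦ₀]; rw [if_pos h]
  have hLl : ∀ i : ℤ, i ≤ -(N:ℤ)-1 → Φ₀ i = v (-(N:ℤ)-1) + k * ((i:ℝ) + (N:ℝ) + 1) := by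
    intro i h; simp only [hΦ₀]; rw [if_neg (by omega), if_pos h]
  have hMm : ∀ i : ℤ, -(N:ℤ)-1 ≤ i → i ≤ (N:ℤ)+1 → Φ₀ i = v i := by
    intro i h1 h2
    by_cases hr : (N:ℤ)+1 ≤ i
    · have hi : i = (N:ℤ)+1 := le_antisymm h2 hr
      rw [hRr i hr, hi]
    · by_cases hl : i ≤ -(N:ℤ)-1
      · have hi : i = -(N:ℤ)-1 := le_antisymm hl h1
        rw [hLl i hl, hi]
        have e : ((-(N:ℤ)-1 : ℤ) : ℝ) + (N:ℝ) + 1 = 0 := by push_cast; ring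
        rw [e, mul_zero, add_zero]
      · simp only [hΦ₀]; rw [if_neg hr, if_neg hl]
  have hsolves : ∀ i : ℤ, max (Φ₀ (i+1) + c i - k) (Φ₀ (i-1) + c i) = Φ₀ i := by
    intro i
    by_cases h1 : (N:ℤ)+2 ≤ i
    · have hci : c i = 0 := hc i (Or.inl (by omega))
      rw [hRr (i+1) (by omega), hRr (i-1) (by omega), hRr i (by omega), hci]
      simp only [add_zero]
      rw [max_eq_right (by linarith)]
    · by_cases h2 : i = (N:ℤ)+1
      · subst h2
        have hci : c ((N:ℤ)+1) = 0 := hc _ (Or.inl le_rfl)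
        have e1 : (N:ℤ)+1+1 = (N:ℤ)+2 := by ring
        have e2 : (N:ℤ)+1-1 = (N:ℤ) := by ring
        rw [e1, e2, hRr ((N:ℤ)+2) (by omega), hRr ((N:ℤ)+1) le_rfl,
          hMm (N:ℤ) (by omega) (by omega), hci]
        have hv' : v ((N:ℤ)+1) = v (N:ℤ) := by rw [hvr, hci, add_zero]
        simp only [add_zero]
        rw [hv', max_eq_right (by linarith)]
      · by_cases h3 : -(N:ℤ) ≤ i
        · have h3b : i ≤ (N:ℤ) := by omega
          rw [hMm (i+1) (by omega) (by omega), hMm (i-1) (by omega) (by omega),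
            hMm i (by omega) (by omega)]
          exact (hv i h3 h3b).symm
        · by_cases h4 : i = -(N:ℤ)-1
          · subst h4
            have hci : c (-(N:ℤ)-1) = 0 := hc _ (Or.inr (by omega))
            have e1 : -(N:ℤ)-1+1 = -(N:ℤ) := by ring
            have e2 : -(N:ℤ)-1-1 = -(N:ℤ)-2 := by ring
            rw [e1, e2, hMm (-(N:ℤ)) (by omega) (by omega),
              hLl (-(N:ℤ)-2) (by omega), hLl (-(N:ℤ)-1) le_rfl, hci]
            have hv' : v (-(N:ℤ)-1) = v (-(N:ℤ)) - k := by rw [hvl, hci]; ring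
            have ea : ((-(N:ℤ)-1 : ℤ):ℝ) + (N:ℝ) + 1 = 0 := by push_cast; ring
            have eb : ((-(N:ℤ)-2 : ℤ):ℝ) + (N:ℝ) + 1 = -1 := by push_cast; ring
            rw [ea, eb]
            simp only [mul_zero, add_zero, mul_neg_one]
            rw [max_eq_left (by linarith [hv', hk])]
            linarith [hv']
          · have h5 : i ≤ -(N:ℤ)-2 := by omega
            have hci : c i = 0 := hc i (Or.inr (by omega))
            rw [hLl (i+1) (by omega), hLl (i-1) (by omega), hLl i (by omega), hci]
            have e1 : v (-(N:ℤ)-1) + k * (((i+1 : ℤ):ℝ) + (N:ℝ) + 1) + 0 - k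
                = v (-(N:ℤ)-1) + k * ((i:ℝ) + (N:ℝ) + 1) := by push_cast; ring
            have e2 : v (-(N:ℤ)-1) + k * (((i-1 : ℤ):ℝ) + (N:ℝ) + 1) + 0
                = v (-(N:ℤ)-1) + k * ((i:ℝ) + (N:ℝ) + 1) - k := by push_cast; ring
            rw [e1, e2, max_eq_left (by linarith)]
  have hAPhi0 : APhi k Φ₀ := by
    intro M
    constructor
    · refine ⟨max M ((N:ℤ)+1), le_max_left _ _, ?_⟩
      have hm : (N:ℤ)+1 ≤ max M ((N:ℤ)+1) := le_max_right _ _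
      rw [hRr _ (by omega), hRr _ (by omega)]
    · refine ⟨max M ((N:ℤ)+1), le_max_left _ _, ?_⟩
      have hm : (N:ℤ)+1 ≤ max M ((N:ℤ)+1) := le_max_right _ _
      rw [hLl _ (by omega), hLl _ (by omega)]
      push_cast
      ring
  refine ⟨Φ₀, ⟨hsolves, hAPhi0, hMm⟩, ?_⟩
  rintro Φ ⟨heq, hA, hag⟩
  -- Right tail: Φ is eventually flat
  have flatR : ∀ j : ℤ, (N:ℤ)+1 ≤ j → Φ (j+1) = Φ j := by
    intro j hj
    have hle : Φ j ≤ Φ (j+1) := by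
      have h := heq (j+1)
      have hc1 : c (j+1) = 0 := hc _ (Or.inl (by omega))
      rw [show j+1-1 = j from by ring, hc1] at h
      have := le_max_right (Φ (j+1+1) + 0 - k) (Φ j + 0)
      rw [h] at this; linarith
    by_contra hne
    have hlt : Φ j < Φ (j+1) := lt_of_le_of_ne hle (fun h => hne h.symm)
    have hkpos : 0 < k := by
      have h := heq j
      have hcj : c j = 0 := hc j (Or.inl hj)
      rw [hcj] at h
      have := le_max_left (Φ (j+1) + 0 - k) (Φ (j-1) + 0)
      rw [h] at this
      linarith
    have step : ∀ m : ℤ, (N:ℤ)+1 ≤ m → Φ m < Φ (m+1) → Φ (m+1) < Φ (m+1+1) := by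
      intro m hm hlt'
      have h := heq (m+1)
      have hc1 : c (m+1) = 0 := hc _ (Or.inl (by omega))
      rw [show m+1-1 = m from by ring, hc1] at h
      rcases max_choice (Φ (m+1+1) + 0 - k) (Φ m + 0) with hch | hch
      · rw [hch] at h; linarith
      · rw [hch] at h; linarith
    have chain : ∀ t : ℕ, Φ (j + t) < Φ (j + t + 1) := by
      intro t
      induction t with
      | zero => simpa using hlt
      | succ n ih =>
        have hs := step (j + n) (by omega) ih
        have e : j + ((n+1:ℕ):ℤ) = j + (n:ℤ) + 1 := by push_cast; ring
        rw [e]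
        exact hs
    obtain ⟨N', hN'ge, hN'eq⟩ := (hA j).1
    have ht : j + (((N' - j).toNat : ℕ) : ℤ) = N' := by omega
    have hch := chain (N' - j).toNat
    rw [ht] at hch
    linarith
  have valR : ∀ m : ℤ, (N:ℤ)+1 ≤ m → Φ m = v ((N:ℤ)+1) := by
    have aux : ∀ t : ℕ, Φ ((N:ℤ)+1+t) = v ((N:ℤ)+1) := by
      intro t; induction t with
      | zero => simpa using hag ((N:ℤ)+1) (by omega) le_rfl
      | succ n ih =>
        have e : (N:ℤ)+1+((n+1:ℕ):ℤ) = ((N:ℤ)+1+(n:ℤ))+1 := by push_cast; ring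
        rw [e, flatR ((N:ℤ)+1+(n:ℤ)) (by omega)]
        exact ih
    intro m hm
    have e : (N:ℤ)+1+(((m-((N:ℤ)+1)).toNat : ℕ) : ℤ) = m := by omega
    rw [← e]; exact aux _
  -- Left tail: Φ descends with slope k
  have hgeL : ∀ m : ℤ, m ≤ -(N:ℤ)-1 → Φ (m+1) - k ≤ Φ m := by
    intro m hm
    have h := heq m
    have hcm : c m = 0 := hc m (Or.inr (by omega))
    rw [hcm] at h
    have := le_max_left (Φ (m+1) + 0 - k) (Φ (m-1) + 0)
    rw [h] at this; linarith
  have claimL : ∀ j : ℤ, j ≤ -(N:ℤ)-1 → Φ j = Φ (j+1) - k := by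
    intro j hj
    by_contra hne
    have hlt : Φ (j+1) - k < Φ j := lt_of_le_of_ne (hgeL j hj) (fun h => hne h.symm)
    have hup : Φ j ≤ Φ (j+1) := by
      have h := heq (j+1)
      have hc1 : c (j+1) = 0 := hc _ (Or.inr (by omega))
      rw [show j+1-1 = j from by ring, hc1] at h
      have := le_max_right (Φ (j+1+1) + 0 - k) (Φ j + 0)
      rw [h] at this; linarith
    have hkpos : 0 < k := by linarith
    have stepL : ∀ m : ℤ, m ≤ -(N:ℤ)-1 → Φ (m+1) - k < Φ m → Φ (m-1) = Φ m := by
      intro m hm hlt'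
      have h := heq m
      have hcm : c m = 0 := hc m (Or.inr (by omega))
      rw [hcm] at h
      rcases max_choice (Φ (m+1) + 0 - k) (Φ (m-1) + 0) with hch | hch
      · rw [hch] at h; linarith
      · rw [hch] at h; linarith
    have chain : ∀ t : ℕ, Φ (j - t) = Φ j ∧ Φ (j - t + 1) - k < Φ (j - t) := by
      intro t; induction t with
      | zero => exact ⟨by simp, by simpa using hlt⟩
      | succ n ih =>
        obtain ⟨ih1, ih2⟩ := ih
        have hjn : j - (n:ℤ) ≤ -(N:ℤ)-1 := by omega
        have hstep := stepL (j - (n:ℤ)) hjn ih2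
        have e : j - ((n+1:ℕ):ℤ) = (j - (n:ℤ)) - 1 := by push_cast; ring
        constructor
        · rw [e, hstep]; exact ih1
        · rw [e, show j - (n:ℤ) - 1 + 1 = j - (n:ℤ) from by ring, hstep, ih1]
          linarith
    obtain ⟨N'', hN''ge, hN''eq⟩ := (hA (-j)).2
    have h1 := (chain ((j + N'').toNat)).1
    have h2 := (chain ((j + N'').toNat + 1)).1
    have e1 : j - (((j + N'').toNat : ℕ) : ℤ) = -N'' := by omega
    have e2 : j - ((((j + N'').toNat + 1 : ℕ)) : ℤ) = -N'' - 1 := by omega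
    rw [e1] at h1
    rw [e2] at h2
    rw [h1, h2] at hN''eq
    linarith
  have valL : ∀ m : ℤ, m ≤ -(N:ℤ)-1 →
      Φ m = v (-(N:ℤ)-1) + k * ((m:ℝ) + (N:ℝ) + 1) := by
    have aux : ∀ t : ℕ, Φ (-(N:ℤ)-1-t) = v (-(N:ℤ)-1) - k * t := by
      intro t; induction t with
      | zero => simpa using hag (-(N:ℤ)-1) le_rfl (by omega)
      | succ n ih =>
        have e : -(N:ℤ)-1-((n+1:ℕ):ℤ) = (-(N:ℤ)-1-(n:ℤ)) - 1 := by push_cast; ring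
        have hcl := claimL (-(N:ℤ)-1-(n:ℤ)-1) (by omega)
        rw [e, hcl, show -(N:ℤ)-1-(n:ℤ)-1+1 = -(N:ℤ)-1-(n:ℤ) from by ring, ih]
        push_cast; ring
    intro m hm
    have hn : ((((-(N:ℤ)-1-m).toNat : ℕ)) : ℤ) = -(N:ℤ)-1-m := by omega
    have e : -(N:ℤ)-1-((((-(N:ℤ)-1-m).toNat : ℕ)) : ℤ) = m := by omega
    have h := aux (-(N:ℤ)-1-m).toNat
    rw [e] at h
    rw [h]
    have hcast : ((((-(N:ℤ)-1-m).toNat : ℕ)) : ℝ) = -(N:ℝ) - 1 - (m:ℝ) := by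
      exact_mod_cast hn
    rw [hcast]; ring
  funext i
  by_cases hr : (N:ℤ)+1 ≤ i
  · rw [valR i hr, hRr i hr]
  · by_cases hl : i ≤ -(N:ℤ)-1
    · rw [valL i hl, hLl i hl]
    · rw [hag i (by omega) (by omega), hMm i (by omega) (by omega)]

/-- Under (AU) and `k ≥ 0`, any solution of the restricted γ-system (resp.
δ-system) on `[-N-1, N+1]` extends uniquely to a solution of the γ-eigenproblem (resp.
δ-eigenproblem) satisfying (AΦ). -/
theorem stmt_7 (u : ℤ → ℝ) (hu : ∀ i : ℤ, 0 ≤ u i ∧ u i ≤ 1) (k : ℝ) (hk : 0 ≤ k)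
    (N : ℕ) (hN : 0 < N) (hAU : ∀ i : ℤ, ((N : ℤ) ≤ i ∨ i ≤ -(N : ℤ)) → u i = 0) :
    (∀ v : ℤ → ℝ, RestrictedG u k N v →
      ∃! Φ : ℤ → ℝ, SolvesG u k Φ ∧ APhi k Φ ∧
        ∀ i : ℤ, -(N : ℤ) - 1 ≤ i → i ≤ (N : ℤ) + 1 → Φ i = v i) ∧
    (∀ v : ℤ → ℝ, RestrictedD u k N v →
      ∃! Φ : ℤ → ℝ, SolvesD u k Φ ∧ APhi k Φ ∧
        ∀ i : ℤ, -(N : ℤ) - 1 ≤ i → i ≤ (N : ℤ) + 1 → Φ i = v i) := by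
  have hgam0 : ∀ i : ℤ, ((N:ℤ)+1 ≤ i ∨ i ≤ -(N:ℤ)) → gam u i = 0 := by
    intro i hi
    have hui : u i = 0 := by
      rcases hi with h | h
      · exact hAU i (Or.inl (by omega))
      · exact hAU i (Or.inr h)
    unfold gam
    rw [hui, min_eq_left (by linarith [(hu (i-1)).2])]
  have hdel0 : ∀ i : ℤ, ((N:ℤ)+1 ≤ i ∨ i ≤ -(N:ℤ)) → del u i = 0 := by
    intro i hi
    have hui : u (i-1) = 0 := by
      rcases hi with h | h
      · exact hAU (i-1) (Or.inl (by omega))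
      · exact hAU (i-1) (Or.inr (by omega))
    unfold del
    rw [hui, min_eq_left (by linarith [(hu i).2])]
  constructor
  · intro v hv
    obtain ⟨h1, h2, h3⟩ := hv
    exact key_unique_ext hk hgam0 h1 h2 h3
  · intro v hv
    obtain ⟨h1, h2, h3⟩ := hv
    exact key_unique_ext hk hdel0 h1 h2 h3
end

section
/- Assume (AU) with bound N, let (l, s) be a soliton of u (case C2), and set k = 1. Then: (a) there exists Φ¹ : ℤ → ℝ satisfying the γ-fundamental relations at l, any two such functions differ by an additive constant, and every such Φ¹ solves the γ-eigenproblem (with k = 1) and satisfies (AΦ); (b) there exists Φ² : ℤ → ℝ satisfying the δ-fundamental relations at (l, s), any two such differ by an additive constant, and every such Φ² solves the δ-eigenproblem (with k = 1) and satisfies (AΦ). Moreover the relations evaluate to: for i ≤ l, Φ¹ i − Φ¹ (i+1) = u i − 1 if u (i−1) + u i < 1 and = −u (i−1) if u (i−1) + u i ≥ 1; for i ≥ l, Φ¹ (i+1) − Φ¹ i = u (i+1) if u i + u (i+1) < 1 and = 1 − u i if u i + u (i+1) ≥ 1; for i ≤ l+s−1, Φ² i − Φ² (i+1) = u (i−1)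 − 1 if u (i−1) + u i < 1 and = −u i if u (i−1) + u i ≥ 1; for i ≥ l+s, Φ² (i+1) − Φ² i = u i if u i + u (i+1) < 1 and = 1 − u (i+1) if u i + u (i+1) ≥ 1. -/
/-- A soliton of `u` at level `v` (case C1). -/
def SolitonC1 (u : ℤ → ℝ) (l : ℤ) (s : ℕ) (v : ℝ) : Prop :=
  1 ≤ s ∧ (∀ i : ℤ, u i + u (i + 1) ≤ v) ∧ v ≤ 1 ∧
  (∀ i : ℤ, l ≤ i → i ≤ l + (s : ℤ) - 1 → u i + u (i + 1) = v) ∧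
  u (l - 1) + u l < v ∧ u (l + (s : ℤ)) + u (l + (s : ℤ) + 1) < v

/-- A soliton of `u` (case C2). -/
def SolitonC2 (u : ℤ → ℝ) (l : ℤ) (s : ℕ) : Prop :=
  1 ≤ s ∧ (∀ i : ℤ, l ≤ i → i ≤ l + (s : ℤ) - 1 → 1 ≤ u i + u (i + 1)) ∧
  u (l - 1) + u l < 1 ∧ u (l + (s : ℤ)) + u (l + (s : ℤ) + 1) < 1

/-- `Φ` satisfies the γ-fundamental relations at `l`. -/
def FundG (u : ℤ → ℝ) (k : ℝ) (l : ℤ) (Φ : ℤ → ℝ) : Prop :=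
  (∀ i : ℤ, i ≤ l → Φ i - Φ (i + 1) = gam u i - k) ∧
  (∀ i : ℤ, l ≤ i → Φ (i + 1) - Φ i = gam u (i + 1))

/-- `Φ` satisfies the δ-fundamental relations at `(l, s)`. -/
def FundD (u : ℤ → ℝ) (k : ℝ) (l : ℤ) (s : ℕ) (Φ : ℤ → ℝ) : Prop :=
  (∀ i : ℤ, i ≤ l + (s : ℤ) - 1 → Φ i - Φ (i + 1) = del u i - k) ∧
  (∀ i : ℤ, l + (s : ℤ) ≤ i → Φ (i + 1) - Φ i = del u (i + 1))

/-! Both systems of fundamental relations prescribe every increment `Φ (i + 1) - Φ i`; the two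
relations that overlap at the switch point agree because the soliton forces
`γ l + γ (l + 1) = 1` and `δ (l + s) + δ (l + s + 1) = 1`. Hence solutions exist and are unique
up to a constant. Since `γ i + γ (i + 1) ≤ 1` and `δ i + δ (i + 1) ≤ 1` always, the first term of
the max equals `Φ i` and dominates left of the switch, the second one right of it. As `u` has
finite support, `γ` and `δ` vanish far out, which gives (AΦ). -/

open Finset

theorem Int.exists_forall_add_one_sub_eq {M : Type*} [AddCommGroup M] (g : ℤ → M) :
    ∃ Φ : ℤ → M, ∀ i, Φ (i + 1) - Φ i = g i := by
  refine ⟨fun i ↦ ∑ j ∈ Ico 0 i, g j - ∑ j ∈ Ico i 0, g j, fun i ↦ ?_⟩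
  beta_reduce
  rcases le_or_gt 0 i with hi | hi
  · rw [← insert_Ico_right_eq_Ico_add_one hi, sum_insert (by simp),
      Ico_eq_empty_of_le (by omega : 0 ≤ i + 1), Ico_eq_empty_of_le hi]
    abel
  · rw [← insert_Ico_add_one_left_eq_Ico hi, sum_insert (by simp),
      Ico_eq_empty_of_le (by omega : i + 1 ≤ 0), Ico_eq_empty_of_le hi.le]
    abel

theorem Int.exists_forall_eq_add_const {M : Type*} [AddCommGroup M] {Φ Ψ : ℤ → M}
    (h : ∀ i, Φ (i + 1) - Φ i = Ψ (i + 1) - Ψ i) : ∃ c, ∀ i, Φ i = Ψ i + c := by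
  have hper : Function.Periodic (Φ - Ψ) 1 := fun i ↦ by
    simp only [Pi.sub_apply]
    rw [sub_eq_sub_iff_sub_eq_sub.mp (h i)]
  refine ⟨Φ 0 - Ψ 0, fun i ↦ ?_⟩
  have := hper.int_mul_eq i
  simp only [mul_one, Pi.sub_apply, Int.cast_id] at this
  rw [← this]
  abel

/-- `FundD u k l s` is literally `FundRel (del u) k (l + s)`, while `FundG u k l` also imposes the
left relation at `l`. -/
def FundRel (w : ℤ → ℝ) (k : ℝ) (m : ℤ) (Φ : ℤ → ℝ) : Prop :=
  (∀ i : ℤ, i ≤ m - 1 → Φ i - Φ (i + 1) = w i - k) ∧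
  (∀ i : ℤ, m ≤ i → Φ (i + 1) - Φ i = w (i + 1))

section

variable {w : ℤ → ℝ} {k : ℝ} {m : ℤ} {Φ Ψ : ℤ → ℝ}

theorem fundRel_iff_forall_add_one_sub :
    FundRel w k m Φ ↔ ∀ i, Φ (i + 1) - Φ i = if i < m then k - w i else w (i + 1) := by
  refine ⟨fun h i ↦ ?_, fun h ↦ ⟨fun i hi ↦ ?_, fun i hi ↦ ?_⟩⟩
  · split_ifs with hi
    · linarith [h.1 i (by omega)]
    · exact h.2 i (by omega)
  · have := h i
    rw [if_pos (by omega)] at this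
    linarith
  · simpa [not_lt.mpr hi] using h i

theorem exists_fundRel : ∃ Φ, FundRel w k m Φ :=
  (Int.exists_forall_add_one_sub_eq _).imp fun _ ↦ fundRel_iff_forall_add_one_sub.2

namespace FundRel

theorem exists_eq_add_const (hΦ : FundRel w k m Φ) (hΨ : FundRel w k m Ψ) :
    ∃ c, ∀ i, Φ i = Ψ i + c :=
  Int.exists_forall_eq_add_const fun i ↦ by
    rw [fundRel_iff_forall_add_one_sub.1 hΦ, fundRel_iff_forall_add_one_sub.1 hΨ]

theorem sub_add_one_of_switch (hΦ : FundRel w k m Φ) (hm : w m + w (m + 1) = k) :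
    Φ m - Φ (m + 1) = w m - k := by
  linarith [hΦ.2 m le_rfl]

theorem max_eq (hΦ : FundRel w k m Φ) (hw : ∀ i, w i + w (i + 1) ≤ k)
    (hm : w m + w (m + 1) = k) (i : ℤ) :
    max (Φ (i + 1) + w i - k) (Φ (i - 1) + w i) = Φ i := by
  have hprev := hw (i - 1)
  rw [sub_add_cancel] at hprev
  rcases le_or_gt i m with hi | hi
  · have hleft : ∀ j ≤ m, Φ j - Φ (j + 1) = w j - k := fun j hj ↦ by
      rcases hj.lt_or_eq with hj | rfl
      · exact hΦ.1 j (by omega)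
      · exact hΦ.sub_add_one_of_switch hm
    have h₀ := hleft i hi
    have h₁ := hleft (i - 1) (by omega)
    rw [sub_add_cancel] at h₁
    rw [max_eq_left (by linarith)]
    linarith
  · have h₀ := hΦ.2 i hi.le
    have h₁ := hΦ.2 (i - 1) (by omega)
    rw [sub_add_cancel] at h₁
    rw [max_eq_right (by linarith [hw i])]
    linarith

theorem aPhi (hΦ : FundRel w k m Φ) (N : ℤ) (hw : ∀ i, (N ≤ i ∨ i ≤ -N) → w i = 0) :
    APhi k Φ := fun M ↦ by
  refine ⟨⟨max M (max m N), le_max_left _ _, ?_⟩, ⟨max M (max (-m) N), le_max_left _ _, ?_⟩⟩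
  · have := hΦ.2 (max M (max m N)) (by omega)
    rw [hw _ (by omega)] at this
    linarith
  · have := hΦ.1 (-max M (max (-m) N) - 1) (by omega)
    rw [hw _ (by omega), sub_add_cancel] at this
    linarith

end FundRel

end

section Weights

variable {u : ℤ → ℝ} {k : ℝ} {l : ℤ} {s : ℕ} {Φ : ℤ → ℝ}

theorem gam_add_gam_add_one_le (i : ℤ) : gam u i + gam u (i + 1) ≤ 1 := by
  have h₀ : gam u i ≤ u i := min_le_left _ _
  have h₁ : gam u (i + 1) ≤ 1 - u i := by
    simpa only [gam, add_sub_cancel_right] using min_le_right _ _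
  linarith

theorem del_add_del_add_one_le (i : ℤ) : del u i + del u (i + 1) ≤ 1 := by
  have h₀ : del u i ≤ 1 - u i := min_le_right _ _
  have h₁ : del u (i + 1) ≤ u i := by
    simpa only [del, add_sub_cancel_right] using min_le_left _ _
  linarith

theorem gam_eq_zero_of_vanish {N : ℤ} (hu : ∀ i, (N ≤ i ∨ i ≤ -N) → u i = 0) {i : ℤ}
    (hi : N + 1 ≤ i ∨ i ≤ -(N + 1)) : gam u i = 0 := by
  simp [gam, hu i (by omega), hu (i - 1) (by omega)]

theorem del_eq_zero_of_vanish {N : ℤ} (hu : ∀ i, (N ≤ i ∨ i ≤ -N) → u i = 0) {i : ℤ}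
    (hi : N + 1 ≤ i ∨ i ≤ -(N + 1)) : del u i = 0 := by
  simp [del, hu i (by omega), hu (i - 1) (by omega)]

theorem SolitonC2.gam_add_gam_add_one (h : SolitonC2 u l s) : gam u l + gam u (l + 1) = 1 := by
  obtain ⟨hs, hmid, hleft, -⟩ := h
  have hl := hmid l le_rfl (by omega)
  rw [gam, gam, add_sub_cancel_right, min_eq_left (by linarith), min_eq_right (by linarith)]
  ring

theorem SolitonC2.del_add_del_add_one (h : SolitonC2 u l s) :
    del u (l + s) + del u (l + s + 1) = 1 := by
  obtain ⟨hs, hmid, -, hright⟩ := h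
  have hl := hmid (l + s - 1) (by omega) le_rfl
  rw [sub_add_cancel] at hl
  rw [del, del, add_sub_cancel_right, min_eq_right (by linarith), min_eq_left (by linarith)]
  ring

theorem fundG_iff (hl : gam u l + gam u (l + 1) = k) :
    FundG u k l Φ ↔ FundRel (gam u) k l Φ := by
  refine ⟨fun h ↦ ⟨fun i hi ↦ h.1 i (by omega), h.2⟩, fun h ↦ ⟨fun i hi ↦ ?_, h.2⟩⟩
  rcases hi.lt_or_eq with hi | rfl
  · exact h.1 i (by omega)
  · exact h.sub_add_one_of_switch hl

theorem fundD_iff : FundD u k l s Φ ↔ FundRel (del u) k (l + s) Φ :=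
  Iff.rfl

theorem FundG.explicit_relations (hΦ : FundG u 1 l Φ) :
    (∀ i : ℤ, i ≤ l →
      (u (i - 1) + u i < 1 → Φ i - Φ (i + 1) = u i - 1) ∧
      (1 ≤ u (i - 1) + u i → Φ i - Φ (i + 1) = -u (i - 1))) ∧
    (∀ i : ℤ, l ≤ i →
      (u i + u (i + 1) < 1 → Φ (i + 1) - Φ i = u (i + 1)) ∧
      (1 ≤ u i + u (i + 1) → Φ (i + 1) - Φ i = 1 - u i)) := by
  refine ⟨fun i hi ↦ ?_, fun i hi ↦ ?_⟩
  · rw [hΦ.1 i hi, gam]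
    exact ⟨fun h ↦ by rw [min_eq_left (by linarith)],
      fun h ↦ by rw [min_eq_right (by linarith)]; ring⟩
  · rw [hΦ.2 i hi, gam, add_sub_cancel_right]
    exact ⟨fun h ↦ by rw [min_eq_left (by linarith)], fun h ↦ by rw [min_eq_right (by linarith)]⟩

theorem FundD.explicit_relations (hΦ : FundD u 1 l s Φ) :
    (∀ i : ℤ, i ≤ l + (s : ℤ) - 1 →
      (u (i - 1) + u i < 1 → Φ i - Φ (i + 1) = u (i - 1) - 1) ∧
      (1 ≤ u (i - 1) + u i → Φ i - Φ (i + 1) = -u i)) ∧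
    (∀ i : ℤ, l + (s : ℤ) ≤ i →
      (u i + u (i + 1) < 1 → Φ (i + 1) - Φ i = u i) ∧
      (1 ≤ u i + u (i + 1) → Φ (i + 1) - Φ i = 1 - u (i + 1))) := by
  refine ⟨fun i hi ↦ ?_, fun i hi ↦ ?_⟩
  · rw [hΦ.1 i hi, del]
    exact ⟨fun h ↦ by rw [min_eq_left (by linarith)],
      fun h ↦ by rw [min_eq_right (by linarith)]; ring⟩
  · rw [hΦ.2 i hi, del, add_sub_cancel_right]
    exact ⟨fun h ↦ by rw [min_eq_left (by linarith)], fun h ↦ by rw [min_eq_right (by linarith)]⟩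

end Weights

theorem stmt_11_general (u : ℤ → ℝ)
    (N : ℕ) (hAU : ∀ i : ℤ, ((N : ℤ) ≤ i ∨ i ≤ -(N : ℤ)) → u i = 0)
    (l : ℤ) (s : ℕ) (hsol : SolitonC2 u l s) (k : ℝ) (hk : k = 1) :
    ((∃ Φ : ℤ → ℝ, FundG u k l Φ) ∧
     (∀ Φ Ψ : ℤ → ℝ, FundG u k l Φ → FundG u k l Ψ → ∃ c : ℝ, ∀ i : ℤ, Φ i = Ψ i + c) ∧
     (∀ Φ : ℤ → ℝ, FundG u k l Φ → SolvesG u k Φ ∧ APhi k Φ)) ∧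
    ((∃ Φ : ℤ → ℝ, FundD u k l s Φ) ∧
     (∀ Φ Ψ : ℤ → ℝ, FundD u k l s Φ → FundD u k l s Ψ → ∃ c : ℝ, ∀ i : ℤ, Φ i = Ψ i + c) ∧
     (∀ Φ : ℤ → ℝ, FundD u k l s Φ → SolvesD u k Φ ∧ APhi k Φ)) ∧
    (∀ Φ : ℤ → ℝ, FundG u k l Φ →
      (∀ i : ℤ, i ≤ l →
        (u (i - 1) + u i < 1 → Φ i - Φ (i + 1) = u i - 1) ∧
        (1 ≤ u (i - 1) + u i → Φ i - Φ (i + 1) = -u (i - 1))) ∧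
      (∀ i : ℤ, l ≤ i →
        (u i + u (i + 1) < 1 → Φ (i + 1) - Φ i = u (i + 1)) ∧
        (1 ≤ u i + u (i + 1) → Φ (i + 1) - Φ i = 1 - u i))) ∧
    (∀ Φ : ℤ → ℝ, FundD u k l s Φ →
      (∀ i : ℤ, i ≤ l + (s : ℤ) - 1 →
        (u (i - 1) + u i < 1 → Φ i - Φ (i + 1) = u (i - 1) - 1) ∧
        (1 ≤ u (i - 1) + u i → Φ i - Φ (i + 1) = -u i)) ∧
      (∀ i : ℤ, l + (s : ℤ) ≤ i →
        (u i + u (i + 1) < 1 → Φ (i + 1) - Φ i = u i) ∧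
        (1 ≤ u i + u (i + 1) → Φ (i + 1) - Φ i = 1 - u (i + 1)))) := by
  subst hk
  have hG (Φ : ℤ → ℝ) : FundG u 1 l Φ ↔ FundRel (gam u) 1 l Φ :=
    fundG_iff hsol.gam_add_gam_add_one
  refine ⟨⟨?_, ?_, ?_⟩, ⟨?_, ?_, ?_⟩, fun Φ hΦ ↦ hΦ.explicit_relations,
    fun Φ hΦ ↦ hΦ.explicit_relations⟩
  · simpa only [hG] using exists_fundRel
  · simpa only [hG] using fun _ _ ↦ FundRel.exists_eq_add_const
  · simp only [hG]
    exact fun Φ hΦ ↦ ⟨hΦ.max_eq gam_add_gam_add_one_le hsol.gam_add_gam_add_one,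
      hΦ.aPhi _ fun _ ↦ gam_eq_zero_of_vanish hAU⟩
  · simpa only [fundD_iff] using exists_fundRel
  · simpa only [fundD_iff] using fun _ _ ↦ FundRel.exists_eq_add_const
  · simp only [fundD_iff]
    exact fun Φ hΦ ↦ ⟨hΦ.max_eq del_add_del_add_one_le hsol.del_add_del_add_one,
      hΦ.aPhi _ fun _ ↦ del_eq_zero_of_vanish hAU⟩

/-- Case C2. For a soliton `(l, s)` of `u` with `k = 1`: the γ- and
δ-fundamental eigenvectors exist, are unique up to an additive constant, solve the respective
eigenproblems and satisfy (AΦ); moreover the fundamental relations evaluate explicitly in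
terms of `u`, with the case split on `u (i-1) + u i < 1` resp. `u i + u (i+1) < 1`. -/
theorem stmt_11 (u : ℤ → ℝ) (hu : ∀ i : ℤ, 0 ≤ u i ∧ u i ≤ 1)
    (N : ℕ) (hN : 0 < N) (hAU : ∀ i : ℤ, ((N : ℤ) ≤ i ∨ i ≤ -(N : ℤ)) → u i = 0)
    (l : ℤ) (s : ℕ) (hsol : SolitonC2 u l s) (k : ℝ) (hk : k = 1) :
    ((∃ Φ : ℤ → ℝ, FundG u k l Φ) ∧
     (∀ Φ Ψ : ℤ → ℝ, FundG u k l Φ → FundG u k l Ψ → ∃ c : ℝ, ∀ i : ℤ, Φ i = Ψ i + c) ∧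
     (∀ Φ : ℤ → ℝ, FundG u k l Φ → SolvesG u k Φ ∧ APhi k Φ)) ∧
    ((∃ Φ : ℤ → ℝ, FundD u k l s Φ) ∧
     (∀ Φ Ψ : ℤ → ℝ, FundD u k l s Φ → FundD u k l s Ψ → ∃ c : ℝ, ∀ i : ℤ, Φ i = Ψ i + c) ∧
     (∀ Φ : ℤ → ℝ, FundD u k l s Φ → SolvesD u k Φ ∧ APhi k Φ)) ∧
    (∀ Φ : ℤ → ℝ, FundG u k l Φ →
      (∀ i : ℤ, i ≤ l →
        (u (i - 1) + u i < 1 → Φ i - Φ (i + 1) = u i - 1) ∧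
        (1 ≤ u (i - 1) + u i → Φ i - Φ (i + 1) = -u (i - 1))) ∧
      (∀ i : ℤ, l ≤ i →
        (u i + u (i + 1) < 1 → Φ (i + 1) - Φ i = u (i + 1)) ∧
        (1 ≤ u i + u (i + 1) → Φ (i + 1) - Φ i = 1 - u i))) ∧
    (∀ Φ : ℤ → ℝ, FundD u k l s Φ →
      (∀ i : ℤ, i ≤ l + (s : ℤ) - 1 →
        (u (i - 1) + u i < 1 → Φ i - Φ (i + 1) = u (i - 1) - 1) ∧
        (1 ≤ u (i - 1) + u i → Φ i - Φ (i + 1) = -u i)) ∧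
      (∀ i : ℤ, l + (s : ℤ) ≤ i →
        (u i + u (i + 1) < 1 → Φ (i + 1) - Φ i = u i) ∧
        (1 ≤ u i + u (i + 1) → Φ (i + 1) - Φ i = 1 - u (i + 1)))) :=
  stmt_11_general u N hAU l s hsol k hk
end

section
/- Let ((l, s), v) be a soliton of u at level v (case C1) and set k = v. Let Φ¹ satisfy the γ-fundamental relations at l and Φ² satisfy the δ-fundamental relations at (l, s), and define the undressed potential ũ i = u i + Φ¹ (i+1) + Φ² i − Φ¹ i − Φ² (i+1). Then ũ i = u (i−1) for all i ≤ l; for all i with l < i < l+s, ũ i = u (i−1) and moreover u (i−1) = u (i+1); and ũ i = u (i+1) for all i ≥ l+s. -/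
/-- Undressing in case C1. For a soliton `((l, s), v)` with `k = v` and a pair
of fundamental eigenvectors `Φ¹, Φ²`, the undressed potential
`ũ i = u i + Φ¹ (i+1) + Φ² i - Φ¹ i - Φ² (i+1)` equals `u (i-1)` before and inside the
soliton (with `u (i-1) = u (i+1)` inside) and `u (i+1)` after the soliton. -/
theorem stmt_12 (u : ℤ → ℝ) (hu : ∀ i : ℤ, 0 ≤ u i ∧ u i ≤ 1)
    (l : ℤ) (s : ℕ) (v : ℝ) (hsol : SolitonC1 u l s v) (k : ℝ) (hk : k = v)
    (Φ1 Φ2 : ℤ → ℝ) (h1 : FundG u k l Φ1) (h2 : FundD u k l s Φ2)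
    (ut : ℤ → ℝ) (hut : ∀ i : ℤ, ut i = u i + Φ1 (i + 1) + Φ2 i - Φ1 i - Φ2 (i + 1)) :
    (∀ i : ℤ, i ≤ l → ut i = u (i - 1)) ∧
    (∀ i : ℤ, l < i → i < l + (s : ℤ) → ut i = u (i - 1) ∧ u (i - 1) = u (i + 1)) ∧
    (∀ i : ℤ, l + (s : ℤ) ≤ i → ut i = u (i + 1)) := by

  obtain ⟨hs, hle, hv1, heq, _, _⟩ := hsol
  have hbd : ∀ i : ℤ, u (i - 1) + u i ≤ 1 := by
    intro i
    have := (hle (i - 1)).trans hv1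
    simpa using this
  have hg : ∀ i : ℤ, gam u i = u i := fun i =>
    min_eq_left (by have := hbd i; linarith)
  have hd : ∀ i : ℤ, del u i = u (i - 1) := fun i =>
    min_eq_left (by have := hbd i; linarith)
  refine ⟨?_, ?_, ?_⟩
  · intro i hi
    have e1 := h1.1 i hi
    have e2 := h2.1 i (by omega)
    rw [hg i] at e1
    rw [hd i] at e2
    rw [hut i]
    linarith
  · intro i hi1 hi2
    have e1 := h1.2 i (by omega)
    have e2 := h2.1 i (by omega)
    have q1 := heq i (by omega) (by omega)
    have q2 := heq (i - 1) (by omega) (by omega)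
    rw [hg (i + 1)] at e1
    rw [hd i] at e2
    rw [show i - 1 + 1 = i by ring] at q2
    rw [hut i]
    constructor <;> linarith
  · intro i hi
    have e1 := h1.2 i (by omega)
    have e2 := h2.2 i hi
    rw [hg (i + 1)] at e1
    rw [hd (i + 1), show i + 1 - 1 = i by ring] at e2
    rw [hut i]
    linarith
end

section
/- Let (l, s) be a soliton of u (case C2) and set k = 1. Let Φ¹ satisfy the γ-fundamental relations at l and Φ² satisfy the δ-fundamental relations at (l, s), and define the undressed potential ũ i = u i + Φ¹ (i+1) + Φ² i − Φ¹ i − Φ² (i+1). Then ũ i = u (i−1) for all i ≤ l; ũ i = 1 − u i for all i with l < i < l+s; and ũ i = u (i+1) for all i ≥ l+s. -/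
/-- Undressing in case C2. For a soliton `(l, s)` with `k = 1` and a pair of
fundamental eigenvectors `Φ¹, Φ²`, the undressed potential equals `u (i-1)` before the
soliton, `1 - u i` strictly inside, and `u (i+1)` after the soliton. -/
theorem stmt_13 (u : ℤ → ℝ) (hu : ∀ i : ℤ, 0 ≤ u i ∧ u i ≤ 1)
    (l : ℤ) (s : ℕ) (hsol : SolitonC2 u l s) (k : ℝ) (hk : k = 1)
    (Φ1 Φ2 : ℤ → ℝ) (h1 : FundG u k l Φ1) (h2 : FundD u k l s Φ2)
    (ut : ℤ → ℝ) (hut : ∀ i : ℤ, ut i = u i + Φ1 (i + 1) + Φ2 i - Φ1 i - Φ2 (i + 1)) :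
    (∀ i : ℤ, i ≤ l → ut i = u (i - 1)) ∧
    (∀ i : ℤ, l < i → i < l + (s : ℤ) → ut i = 1 - u i) ∧
    (∀ i : ℤ, l + (s : ℤ) ≤ i → ut i = u (i + 1)) := by
  obtain ⟨hs, hin, _, _⟩ := hsol
  subst hk
  refine ⟨?_, ?_, ?_⟩
  · intro i hi
    have e1 := h1.1 i hi
    have e2 := h2.1 i (by omega)
    simp only [gam, del, add_sub_cancel_right] at e1 e2
    rcases le_or_gt (u i) (1 - u (i - 1)) with h | h
    · rw [min_eq_left h] at e1
      rw [min_eq_left (by linarith)] at e2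
      rw [hut i]; linarith
    · rw [min_eq_right h.le] at e1
      rw [min_eq_right (by linarith)] at e2
      rw [hut i]; linarith
  · intro i hl hr
    have e1 := h1.2 i (by omega)
    have e2 := h2.1 i (by omega)
    have g1 := hin (i - 1) (by omega) (by omega)
    have g2 := hin i (by omega) (by omega)
    rw [sub_add_cancel] at g1
    simp only [gam, del, add_sub_cancel_right] at e1 e2
    rw [min_eq_right (by linarith)] at e1
    rw [min_eq_right (by linarith)] at e2
    rw [hut i]; linarith
  · intro i hi
    have e1 := h1.2 i (by omega)
    have e2 := h2.2 i hi
    simp only [gam, del, add_sub_cancel_right] at e1 e2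
    rcases le_or_gt (u (i + 1)) (1 - u i) with h | h
    · rw [min_eq_left h] at e1
      rw [min_eq_left (by linarith)] at e2
      rw [hut i]; linarith
    · rw [min_eq_right h.le] at e1
      rw [min_eq_right (by linarith)] at e2
      rw [hut i]; linarith
end

section
/- Let (l, s) be a soliton of u (case C2) with s ≥ 2 and set k = 1. Let Φ¹ satisfy the γ-fundamental relations at l and Φ² satisfy the δ-fundamental relations at (l, s), and define the undressed potential ũ i = u i + Φ¹ (i+1) + Φ² i − Φ¹ i − Φ² (i+1). Then ũ l + ũ (l+1) < 1, ũ (l+s−1) + ũ (l+s) < 1, and ũ i + ũ (i+1) = 2 − u i − u (i+1) for all i with l < i < l+s−1 (so the undressed soliton loses at least two units of length on its ends, and an interior two-cycle remains heavy only where u i + u (i+1) = 1). -/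
lemma gamh' (u : ℤ → ℝ) (i j : ℤ) (hij : j = i + 1) (h : 1 ≤ u i + u j) :
    gam u j = 1 - u i := by
  subst hij; unfold gam
  rw [show i + 1 - 1 = i from by ring]
  exact min_eq_right (by linarith)

lemma gaml' (u : ℤ → ℝ) (i j : ℤ) (hij : j = i + 1) (h : u i + u j < 1) :
    gam u j = u j := by
  subst hij; unfold gam
  rw [show i + 1 - 1 = i from by ring]
  exact min_eq_left (by linarith)

lemma delh' (u : ℤ → ℝ) (i j : ℤ) (hij : j = i + 1) (h : 1 ≤ u i + u j) :
    del u j = 1 - u j := by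
  subst hij; unfold del
  rw [show i + 1 - 1 = i from by ring]
  exact min_eq_right (by linarith)

lemma dell' (u : ℤ → ℝ) (i j : ℤ) (hij : j = i + 1) (h : u i + u j < 1) :
    del u j = u i := by
  subst hij; unfold del
  rw [show i + 1 - 1 = i from by ring]
  exact min_eq_left (by linarith)

/-- In case C2 with `s ≥ 2` and `k = 1`, after undressing the soliton loses at
least two units of length on its ends: `ũ l + ũ (l+1) < 1`, `ũ (l+s-1) + ũ (l+s) < 1`, and
`ũ i + ũ (i+1) = 2 - u i - u (i+1)` strictly inside. -/
theorem stmt_14 (u : ℤ → ℝ) (hu : ∀ i : ℤ, 0 ≤ u i ∧ u i ≤ 1)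
    (l : ℤ) (s : ℕ) (hs : 2 ≤ s) (hsol : SolitonC2 u l s) (k : ℝ) (hk : k = 1)
    (Φ1 Φ2 : ℤ → ℝ) (h1 : FundG u k l Φ1) (h2 : FundD u k l s Φ2)
    (ut : ℤ → ℝ) (hut : ∀ i : ℤ, ut i = u i + Φ1 (i + 1) + Φ2 i - Φ1 i - Φ2 (i + 1)) :
    ut l + ut (l + 1) < 1 ∧
    ut (l + (s : ℤ) - 1) + ut (l + (s : ℤ)) < 1 ∧
    (∀ i : ℤ, l < i → i < l + (s : ℤ) - 1 → ut i + ut (i + 1) = 2 - u i - u (i + 1)) := by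
  subst hk
  obtain ⟨hs1, hheavy, hL, hR⟩ := hsol
  refine ⟨?_, ?_, ?_⟩
  · -- left end
    have hu0 := hut l
    have hu1 := hut (l + 1)
    have e1 := h1.2 l le_rfl
    have e2 := h1.2 (l + 1) (by omega)
    have e3 := h2.1 l (by omega)
    have e4 := h2.1 (l + 1) (by omega)
    have g1 : gam u (l + 1) = 1 - u l := gamh' u l (l + 1) rfl (hheavy l le_rfl (by omega))
    have g2 : gam u (l + 1 + 1) = 1 - u (l + 1) :=
      gamh' u (l + 1) (l + 1 + 1) rfl (hheavy (l + 1) (by omega) (by omega))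
    have d1 : del u l = u (l - 1) := dell' u (l - 1) l (by ring) hL
    have d2 : del u (l + 1) = 1 - u (l + 1) :=
      delh' u l (l + 1) rfl (hheavy l le_rfl (by omega))
    have hb : u (l - 1) < 1 - u l := by linarith
    have hc : 1 ≤ u l + u (l + 1) := hheavy l le_rfl (by omega)
    linarith
  · -- right end
    have hu0 := hut (l + (s : ℤ) - 1)
    have hu1 := hut (l + (s : ℤ))
    have e1 := h1.2 (l + (s : ℤ) - 1) (by omega)
    have e2 := h1.2 (l + (s : ℤ)) (by omega)
    have e3 := h2.1 (l + (s : ℤ) - 1) (by omega)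
    have e4 := h2.2 (l + (s : ℤ)) le_rfl
    have g1 : gam u (l + (s : ℤ) - 1 + 1) = 1 - u (l + (s : ℤ) - 1) :=
      gamh' u (l + (s : ℤ) - 1) _ rfl (by
        have := hheavy (l + (s : ℤ) - 1) (by omega) (by omega); exact this)
    have g2 : gam u (l + (s : ℤ) + 1) = u (l + (s : ℤ) + 1) :=
      gaml' u (l + (s : ℤ)) _ rfl hR
    have d1 : del u (l + (s : ℤ) - 1) = 1 - u (l + (s : ℤ) - 1) :=
      delh' u (l + (s : ℤ) - 2) _ (by ring) (by
        have := hheavy (l + (s : ℤ) - 2) (by omega) (by omega)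
        rwa [show l + (s : ℤ) - 2 + 1 = l + (s : ℤ) - 1 from by ring] at this)
    have d2 : del u (l + (s : ℤ) + 1) = u (l + (s : ℤ)) :=
      dell' u (l + (s : ℤ)) _ rfl hR
    have hrw : l + (s : ℤ) - 1 + 1 = l + (s : ℤ) := by ring
    rw [hrw] at hu0 e1 e3 g1
    have hc : 1 ≤ u (l + (s : ℤ) - 1) + u (l + (s : ℤ)) := by
      have := hheavy (l + (s : ℤ) - 1) (by omega) (by omega)
      rwa [hrw] at this
    linarith
  · -- interior
    intro i hi1 hi2
    have hu0 := hut i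
    have hu1 := hut (i + 1)
    have e1 := h1.2 i (by omega)
    have e2 := h1.2 (i + 1) (by omega)
    have e3 := h2.1 i (by omega)
    have e4 := h2.1 (i + 1) (by omega)
    have g1 : gam u (i + 1) = 1 - u i :=
      gamh' u i _ rfl (hheavy i (by omega) (by omega))
    have g2 : gam u (i + 1 + 1) = 1 - u (i + 1) :=
      gamh' u (i + 1) _ rfl (hheavy (i + 1) (by omega) (by omega))
    have d1 : del u i = 1 - u i :=
      delh' u (i - 1) _ (by ring) (by
        have := hheavy (i - 1) (by omega) (by omega)
        rwa [show i - 1 + 1 = i from by ring] at this)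
    have d2 : del u (i + 1) = 1 - u (i + 1) :=
      delh' u i _ rfl (hheavy i (by omega) (by omega))
    linarith
end

section
/- Assume (AU) with bound N, let ((l, s), v) be a soliton of u at level v (case C1), and set k = v. Let Φ¹ satisfy the γ-fundamental relations at l and Φ² satisfy the δ-fundamental relations at (l, s), normalized so that Φ¹ i = 0 and Φ² i = 0 for all i ≥ N. Then Φ¹ i = Φ² (i+1) for all i ∈ ℤ, the backward constraint holds for (Φ¹, Φ²), and the forward constraint with parameter μ = 0 holds for (Φ¹, Φ²); that is, the fundamental eigenpair solves the full ultradiscrete Lax system in case C1. -/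
/-- The backward constraint for `(Φ¹, Φ²)`. -/
def Backward (u Φ1 Φ2 : ℤ → ℝ) : Prop :=
  ∀ i : ℤ, Φ1 i = max (Φ2 (i + 1)) (Φ1 (i + 1) + u i - 1)

/-- The forward constraint with parameter `μ` for `(Φ¹, Φ²)`. -/
def Forward (u : ℤ → ℝ) (k μ : ℝ) (Φ1 Φ2 : ℤ → ℝ) : Prop :=
  ∀ i : ℤ, Φ2 (i + 1) = max (Φ1 i - μ) (Φ2 i + u i + k - 1)

/-!
Since `u (i-1) + u i ≤ v ≤ 1`, the minima simplify to `γ i = u i` and `δ i = u (i-1)`, so with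
`k = v` both fundamental relations become explicit increment rules. Comparing them block by block
(left of `l`, inside the soliton where `u i + u (i+1) = v`, right of it) shows that `Φ¹ i` and
`Φ² (i+1)` have the same increments everywhere; the normalization at `N` fixes the constant to
`0`. Both constraints then reduce to `u i + u (i+1) ≤ v ≤ 1`, which makes the second argument of
each `max` the smaller one.
-/

namespace SolitonC1

variable {u : ℤ → ℝ} {l : ℤ} {s : ℕ} {v : ℝ}

lemma one_le_length (hsol : SolitonC1 u l s v) : (1 : ℤ) ≤ s := by exact_mod_cast hsol.1

lemma add_succ_le (hsol : SolitonC1 u l s v) (i : ℤ) : u i + u (i + 1) ≤ v := hsol.2.1 i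

lemma le_one (hsol : SolitonC1 u l s v) : v ≤ 1 := hsol.2.2.1

lemma add_succ_eq (hsol : SolitonC1 u l s v) {i : ℤ} (hli : l ≤ i) (his : i ≤ l + s - 1) :
    u i + u (i + 1) = v :=
  hsol.2.2.2.1 i hli his

lemma add_le_one (hsol : SolitonC1 u l s v) (i : ℤ) : u (i - 1) + u i ≤ 1 := by
  have h := hsol.add_succ_le (i - 1)
  rw [sub_add_cancel] at h
  linarith [hsol.le_one]

lemma gam_eq (hsol : SolitonC1 u l s v) (i : ℤ) : gam u i = u i :=
  min_eq_left (by linarith [hsol.add_le_one i])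

lemma del_eq (hsol : SolitonC1 u l s v) (i : ℤ) : del u i = u (i - 1) :=
  min_eq_left (by linarith [hsol.add_le_one i])

variable {Φ : ℤ → ℝ}

lemma fundG_succ_of_le (hsol : SolitonC1 u l s v) (h : FundG u v l Φ) {i : ℤ}
    (hi : i ≤ l + s - 1) : Φ (i + 1) = Φ i + v - u i := by
  rcases le_or_gt i l with hil | hli
  · linarith [h.1 i hil, hsol.gam_eq i]
  · linarith [h.2 i hli.le, hsol.gam_eq (i + 1), hsol.add_succ_eq hli.le hi]

lemma fundG_succ_of_ge (hsol : SolitonC1 u l s v) (h : FundG u v l Φ) {i : ℤ} (hi : l ≤ i) :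
    Φ (i + 1) = Φ i + u (i + 1) := by
  linarith [h.2 i hi, hsol.gam_eq (i + 1)]

lemma fundD_succ_of_le (hsol : SolitonC1 u l s v) (h : FundD u v l s Φ) {i : ℤ}
    (hi : i ≤ l + s - 1) : Φ (i + 1) = Φ i + v - u (i - 1) := by
  linarith [h.1 i hi, hsol.del_eq i]

lemma fundD_succ_of_ge (hsol : SolitonC1 u l s v) (h : FundD u v l s Φ) {i : ℤ}
    (hi : l + s ≤ i) : Φ (i + 1) = Φ i + u i := by
  have h' := h.2 i hi
  rw [hsol.del_eq, add_sub_cancel_right] at h'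
  linarith

lemma fundG_succ_add_le (hsol : SolitonC1 u l s v) (h : FundG u v l Φ) (i : ℤ) :
    Φ (i + 1) + u i - 1 ≤ Φ i := by
  have hv := hsol.le_one
  have hs := hsol.one_le_length
  rcases le_or_gt i l with hil | hli
  · linarith [hsol.fundG_succ_of_le h (i := i) (by omega)]
  · linarith [hsol.fundG_succ_of_ge h hli.le, hsol.add_succ_le i]

lemma fundD_add_le_succ (hsol : SolitonC1 u l s v) (h : FundD u v l s Φ) (i : ℤ) :
    Φ i + u i + v - 1 ≤ Φ (i + 1) := by
  have hv := hsol.le_one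
  rcases le_or_gt i (l + s - 1) with hi | hi
  · linarith [hsol.fundD_succ_of_le h hi, hsol.add_le_one i]
  · linarith [hsol.fundD_succ_of_ge h (i := i) (by omega)]

lemma periodic_fundG_sub_fundD_succ (hsol : SolitonC1 u l s v) {Φ1 Φ2 : ℤ → ℝ}
    (h1 : FundG u v l Φ1) (h2 : FundD u v l s Φ2) :
    Function.Periodic (fun i => Φ1 i - Φ2 (i + 1)) 1 := by
  intro i
  have hs := hsol.one_le_length
  show Φ1 (i + 1) - Φ2 (i + 1 + 1) = Φ1 i - Φ2 (i + 1)
  rcases le_or_gt i (l - 1) with hil | hli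
  · have h2i := hsol.fundD_succ_of_le h2 (i := i + 1) (by omega)
    rw [add_sub_cancel_right] at h2i
    linarith [hsol.fundG_succ_of_le h1 (i := i) (by omega)]
  have h1i := hsol.fundG_succ_of_ge h1 (i := i) (by omega)
  rcases le_or_gt (i + 1) (l + s - 1) with his | his
  · have h2i := hsol.fundD_succ_of_le h2 his
    rw [add_sub_cancel_right] at h2i
    linarith [hsol.add_succ_eq (i := i) (by omega) (by omega)]
  · linarith [hsol.fundD_succ_of_ge h2 (i := i + 1) (by omega)]

end SolitonC1

theorem stmt_15_general (u : ℤ → ℝ) (N : ℕ)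
    (l : ℤ) (s : ℕ) (v : ℝ) (hsol : SolitonC1 u l s v) (k : ℝ) (hk : k = v)
    (Φ1 Φ2 : ℤ → ℝ) (h1 : FundG u k l Φ1) (h2 : FundD u k l s Φ2)
    (hnorm : ∀ i : ℤ, (N : ℤ) ≤ i → Φ1 i = 0 ∧ Φ2 i = 0) :
    (∀ i : ℤ, Φ1 i = Φ2 (i + 1)) ∧ Backward u Φ1 Φ2 ∧ Forward u k 0 Φ1 Φ2 := by
  subst hk
  have hper := hsol.periodic_fundG_sub_fundD_succ h1 h2
  have hshift (i : ℤ) : Φ1 i = Φ2 (i + 1) := by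
    have hi : Φ1 i - Φ2 (i + 1) = Φ1 N - Φ2 (N + 1) := by
      simpa using (hper.int_mul_eq i).trans (hper.int_mul_eq N).symm
    linarith [(hnorm N le_rfl).1, (hnorm (N + 1) (by omega)).2]
  refine ⟨hshift, fun i => ?_, fun i => ?_⟩
  · rw [← hshift i, max_eq_left (hsol.fundG_succ_add_le h1 i)]
  · rw [sub_zero, hshift i, max_eq_left (hsol.fundD_add_le_succ h2 i)]

/-- In case C1, a normalized fundamental eigenpair satisfies
`Φ¹ i = Φ² (i+1)`, the backward constraint, and the forward constraint with `μ = 0`: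
it solves the full ultradiscrete Lax system. -/
theorem stmt_15 (u : ℤ → ℝ) (hu : ∀ i : ℤ, 0 ≤ u i ∧ u i ≤ 1)
    (N : ℕ) (hN : 0 < N) (hAU : ∀ i : ℤ, ((N : ℤ) ≤ i ∨ i ≤ -(N : ℤ)) → u i = 0)
    (l : ℤ) (s : ℕ) (v : ℝ) (hsol : SolitonC1 u l s v) (k : ℝ) (hk : k = v)
    (Φ1 Φ2 : ℤ → ℝ) (h1 : FundG u k l Φ1) (h2 : FundD u k l s Φ2)
    (hnorm : ∀ i : ℤ, (N : ℤ) ≤ i → Φ1 i = 0 ∧ Φ2 i = 0) :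
    (∀ i : ℤ, Φ1 i = Φ2 (i + 1)) ∧ Backward u Φ1 Φ2 ∧ Forward u k 0 Φ1 Φ2 :=
  stmt_15_general u N l s v hsol k hk Φ1 Φ2 h1 h2 hnorm
end

section
/- Assume (AU) with bound N, let (l, s) be a soliton of u (case C2), and assume u has exactly one soliton, i.e. u i + u (i+1) < 1 for every i not in [l, l+s−1]. Set k = 1. Let Φ¹ satisfy the γ-fundamental relations at l and Φ² satisfy the δ-fundamental relations at (l, s), normalized so that Φ¹ i = 0 and Φ² i = 0 for all i ≥ N, and set μ = Σ_{i=l}^{l+s−1} (u i + u (i+1) − 1). Then μ ≥ 0, the backward constraint holds for (Φ¹, Φ²), and the forward constraint with parameter μ holds for (Φ¹, Φ²); that is, in the one-soliton case the fundamental eigenpair solves the full ultradiscrete Lax system. -/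
/-- In case C2 with exactly one soliton and `k = 1`, the normalized fundamental
eigenpair satisfies the backward constraint and the forward constraint with parameter
`μ = Σ_{i=l}^{l+s-1} (u i + u (i+1) - 1) ≥ 0`: it solves the full ultradiscrete Lax system. -/
theorem stmt_16 (u : ℤ → ℝ) (hu : ∀ i : ℤ, 0 ≤ u i ∧ u i ≤ 1)
    (N : ℕ) (hN : 0 < N) (hAU : ∀ i : ℤ, ((N : ℤ) ≤ i ∨ i ≤ -(N : ℤ)) → u i = 0)
    (l : ℤ) (s : ℕ) (hsol : SolitonC2 u l s)
    (honesol : ∀ i : ℤ, ¬(l ≤ i ∧ i ≤ l + (s : ℤ) - 1) → u i + u (i + 1) < 1)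
    (k : ℝ) (hk : k = 1)
    (Φ1 Φ2 : ℤ → ℝ) (h1 : FundG u k l Φ1) (h2 : FundD u k l s Φ2)
    (hnorm : ∀ i : ℤ, (N : ℤ) ≤ i → Φ1 i = 0 ∧ Φ2 i = 0)
    (μ : ℝ) (hμ : μ = ∑ i ∈ Finset.Icc l (l + (s : ℤ) - 1), (u i + u (i + 1) - 1)) :
    0 ≤ μ ∧ Backward u Φ1 Φ2 ∧ Forward u k μ Φ1 Φ2 := by
  obtain ⟨hs1, hsol2, hsoll, hsolr⟩ := hsol
  obtain ⟨h1a, h1b⟩ := h1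
  obtain ⟨h2a, h2b⟩ := h2
  subst hk
  -- values of gam and del
  have hout : ∀ i : ℤ, i < l ∨ l + (s:ℤ) - 1 < i → u i + u (i + 1) < 1 := by
    intro i h
    exact honesol i (by rintro ⟨a, b⟩; omega)
  have gamL : ∀ i : ℤ, u (i - 1) + u i < 1 → gam u i = u i := by
    intro i h; unfold gam; exact min_eq_left (by linarith)
  have gamL' : ∀ i : ℤ, u i + u (i + 1) < 1 → gam u (i + 1) = u (i + 1) := by
    intro i h
    have := gamL (i + 1) (by simpa using h)
    simpa using this
  have gamH' : ∀ i : ℤ, 1 ≤ u i + u (i + 1) → gam u (i + 1) = 1 - u i := by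
    intro i h
    have : gam u (i + 1) = 1 - u (i + 1 - 1) := by
      unfold gam; exact min_eq_right (by simp only [add_sub_cancel_right]; linarith)
    simpa using this
  have delL' : ∀ i : ℤ, u i + u (i + 1) < 1 → del u (i + 1) = u i := by
    intro i h
    have : del u (i + 1) = u (i + 1 - 1) := by
      unfold del; exact min_eq_left (by simp only [add_sub_cancel_right]; linarith)
    simpa using this
  have delH : ∀ i : ℤ, 1 ≤ u (i - 1) + u i → del u i = 1 - u i := by
    intro i h; unfold del; exact min_eq_right (by linarith)
  have delH' : ∀ i : ℤ, 1 ≤ u i + u (i + 1) → del u (i + 1) = 1 - u (i + 1) := by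
    intro i h; exact delH (i + 1) (by simpa using h)
  -- step lemmas for E i = Φ1 i - Φ2 (i+1)
  have stepLow : ∀ i : ℤ, i ≤ l - 1 →
      Φ1 i - Φ2 (i + 1) = Φ1 (i + 1) - Φ2 (i + 1 + 1) := by
    intro i hi
    have e1 : Φ1 i - Φ1 (i + 1) = gam u i - 1 := h1a i (by omega)
    have e2 : Φ2 (i + 1) - Φ2 (i + 1 + 1) = del u (i + 1) - 1 := h2a (i + 1) (by omega)
    have g1 : gam u i = u i := by
      apply gamL
      have := hout (i - 1) (by omega)
      simpa using this
    have g2 : del u (i + 1) = u i := delL' i (hout i (by omega))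
    linarith
  have stepMid : ∀ i : ℤ, l ≤ i → i ≤ l + (s:ℤ) - 1 →
      Φ1 i - Φ2 (i + 1) = (Φ1 (i + 1) - Φ2 (i + 1 + 1)) + (u i + u (i + 1) - 1) := by
    intro i hi1 hi2
    have e1 : Φ1 (i + 1) - Φ1 i = gam u (i + 1) := h1b i hi1
    have g1 : gam u (i + 1) = 1 - u i := gamH' i (hsol2 i hi1 hi2)
    have e2 : Φ2 (i + 1) - Φ2 (i + 1 + 1) = -u (i + 1) := by
      rcases lt_or_ge i (l + (s:ℤ) - 1) with h | h
      · have e := h2a (i + 1) (by omega)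
        have g : del u (i + 1) = 1 - u (i + 1) := delH' i (hsol2 i hi1 hi2)
        linarith
      · have e := h2b (i + 1) (by omega)
        have g : del u (i + 1 + 1) = u (i + 1) := delL' (i + 1) (hout (i + 1) (by omega))
        linarith
    linarith
  have stepHigh : ∀ i : ℤ, l + (s:ℤ) ≤ i →
      Φ1 i - Φ2 (i + 1) = Φ1 (i + 1) - Φ2 (i + 1 + 1) := by
    intro i hi
    have e1 : Φ1 (i + 1) - Φ1 i = gam u (i + 1) := h1b i (by omega)
    have g1 : gam u (i + 1) = u (i + 1) := gamL' i (hout i (by omega))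
    have e2 : Φ2 (i + 1 + 1) - Φ2 (i + 1) = del u (i + 1 + 1) := h2b (i + 1) (by omega)
    have g2 : del u (i + 1 + 1) = u (i + 1) := delL' (i + 1) (hout (i + 1) (by omega))
    linarith
  -- E is zero from l+s on
  have hconstHigh : ∀ n : ℕ, ∀ i : ℤ, l + (s:ℤ) ≤ i →
      Φ1 i - Φ2 (i + 1) = Φ1 (i + (n:ℤ)) - Φ2 (i + (n:ℤ) + 1) := by
    intro n
    induction n with
    | zero => intro i hi; norm_num
    | succ n ih =>
      intro i hi
      have ha := stepHigh i hi
      have hb := ih (i + 1) (by omega)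
      push_cast
      rw [show i + ((n:ℤ) + 1) = i + 1 + (n:ℤ) from by ring]
      rw [ha, hb]
  have hEhigh : ∀ i : ℤ, l + (s:ℤ) ≤ i → Φ1 i - Φ2 (i + 1) = 0 := by
    intro i hi
    have hn := hconstHigh ((N:ℤ) - i).toNat i hi
    have hge : (N:ℤ) ≤ i + (((N:ℤ) - i).toNat : ℤ) := by
      have := Int.self_le_toNat ((N:ℤ) - i); omega
    have z1 := (hnorm _ hge).1
    have z2 := (hnorm (i + (((N:ℤ) - i).toNat : ℤ) + 1) (by omega)).2
    rw [hn, z1, z2]; ring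
  -- E is constant below l
  have hconstLow : ∀ n : ℕ,
      Φ1 (l - (n:ℤ)) - Φ2 (l - (n:ℤ) + 1) = Φ1 l - Φ2 (l + 1) := by
    intro n
    induction n with
    | zero => norm_num
    | succ n ih =>
      have ha := stepLow (l - (n:ℤ) - 1) (by omega)
      rw [show l - (n:ℤ) - 1 + 1 = l - (n:ℤ) from by ring] at ha
      push_cast
      rw [show l - ((n:ℤ) + 1) = l - (n:ℤ) - 1 from by ring,
          show l - (n:ℤ) - 1 + 1 = l - (n:ℤ) from by ring]
      rw [ha, ih]
  have hElow : ∀ i : ℤ, i ≤ l → Φ1 i - Φ2 (i + 1) = Φ1 l - Φ2 (l + 1) := by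
    intro i hi
    have := hconstLow ((l - i).toNat)
    rw [show l - (((l - i).toNat : ℤ)) = i from by omega] at this
    exact this
  -- telescoping sum
  have hsum : ∀ n : ℕ, (n:ℤ) ≤ (s:ℤ) →
      Φ1 l - Φ2 (l + 1) = (Φ1 (l + (n:ℤ)) - Φ2 (l + (n:ℤ) + 1)) +
        ∑ i ∈ Finset.Icc l (l + (n:ℤ) - 1), (u i + u (i + 1) - 1) := by
    intro n
    induction n with
    | zero =>
      intro _
      rw [show l + ((0:ℕ):ℤ) - 1 = l - 1 from by push_cast; ring,
          show l + ((0:ℕ):ℤ) = l from by push_cast; ring,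
          Finset.Icc_eq_empty (by omega : ¬ l ≤ l - 1), Finset.sum_empty]
      ring
    | succ n ih =>
      intro hn
      have ihh := ih (by omega)
      have hmid := stepMid (l + (n:ℤ)) (by omega) (by omega)
      push_cast
      rw [show l + ((n:ℤ) + 1) = l + (n:ℤ) + 1 from by ring]
      have hins : Finset.Icc l (l + (n:ℤ)) = insert (l + (n:ℤ)) (Finset.Icc l (l + (n:ℤ) - 1)) := by
        ext x; simp only [Finset.mem_Icc, Finset.mem_insert]; omega
      rw [show l + (n:ℤ) + 1 - 1 = l + (n:ℤ) from by ring, hins,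
          Finset.sum_insert (by simp only [Finset.mem_Icc]; omega)]
      linarith
  have hmu : Φ1 l - Φ2 (l + 1) = μ := by
    have := hsum s (le_refl _)
    have h0 := hEhigh (l + (s:ℤ)) (le_refl _)
    rw [hμ]; linarith
  have hmu0 : 0 ≤ μ := by
    rw [hμ]
    apply Finset.sum_nonneg
    intro i hi
    rw [Finset.mem_Icc] at hi
    have := hsol2 i hi.1 hi.2
    linarith
  -- E i ≤ μ for all i
  have hEleMid : ∀ n : ℕ, (n:ℤ) ≤ (s:ℤ) →
      Φ1 (l + (n:ℤ)) - Φ2 (l + (n:ℤ) + 1) ≤ Φ1 l - Φ2 (l + 1) := by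
    intro n
    induction n with
    | zero => intro _; norm_num
    | succ n ih =>
      intro hn
      have ihh := ih (by omega)
      have hmid := stepMid (l + (n:ℤ)) (by omega) (by omega)
      have hpos := hsol2 (l + (n:ℤ)) (by omega) (by omega)
      push_cast
      rw [show l + ((n:ℤ) + 1) = l + (n:ℤ) + 1 from by ring]
      linarith
  have hEle : ∀ i : ℤ, Φ1 i - Φ2 (i + 1) ≤ μ := by
    intro i
    rcases le_or_gt i l with hi | hi
    · rw [hElow i hi, hmu]
    · rcases le_or_gt i (l + (s:ℤ)) with hi2 | hi2
      · have hn := hEleMid ((i - l).toNat) (by omega)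
        rw [show l + (((i - l).toNat : ℤ)) = i from by omega] at hn
        linarith [hmu]
      · rw [hEhigh i (by omega)]; exact hmu0
  -- 0 ≤ E i for all i
  have hEgeMid : ∀ n : ℕ, (n:ℤ) ≤ (s:ℤ) →
      0 ≤ Φ1 (l + (s:ℤ) - (n:ℤ)) - Φ2 (l + (s:ℤ) - (n:ℤ) + 1) := by
    intro n
    induction n with
    | zero =>
      intro _
      have := hEhigh (l + (s:ℤ)) (le_refl _)
      rw [show l + (s:ℤ) - ((0:ℕ):ℤ) = l + (s:ℤ) from by push_cast; ring]
      linarith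
    | succ n ih =>
      intro hn
      have ihh := ih (by omega)
      have hmid := stepMid (l + (s:ℤ) - (n:ℤ) - 1) (by omega) (by omega)
      rw [show l + (s:ℤ) - (n:ℤ) - 1 + 1 = l + (s:ℤ) - (n:ℤ) from by ring] at hmid
      have hpos := hsol2 (l + (s:ℤ) - (n:ℤ) - 1) (by omega) (by omega)
      rw [show l + (s:ℤ) - (n:ℤ) - 1 + 1 = l + (s:ℤ) - (n:ℤ) from by ring] at hpos
      push_cast
      rw [show l + (s:ℤ) - ((n:ℤ) + 1) = l + (s:ℤ) - (n:ℤ) - 1 from by ring,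
          show l + (s:ℤ) - (n:ℤ) - 1 + 1 = l + (s:ℤ) - (n:ℤ) from by ring]
      linarith
  have hEge : ∀ i : ℤ, 0 ≤ Φ1 i - Φ2 (i + 1) := by
    intro i
    rcases le_or_gt i l with hi | hi
    · rw [hElow i hi, hmu]; exact hmu0
    · rcases le_or_gt i (l + (s:ℤ)) with hi2 | hi2
      · have hn := hEgeMid ((l + (s:ℤ) - i).toNat) (by omega)
        rw [show l + (s:ℤ) - (((l + (s:ℤ) - i).toNat : ℤ)) = i from by omega] at hn
        exact hn
      · rw [hEhigh i (by omega)]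
  refine ⟨hmu0, ?_, ?_⟩
  · -- Backward
    intro i
    rcases le_or_gt i (l + (s:ℤ) - 1) with hi | hi
    · have key : Φ1 i = Φ1 (i + 1) + u i - 1 := by
        rcases le_or_gt i l with h | h
        · have e1 : Φ1 i - Φ1 (i + 1) = gam u i - 1 := h1a i h
          have g1 : gam u i = u i := by
            apply gamL
            have := hout (i - 1) (by omega)
            simpa using this
          linarith
        · have e1 : Φ1 (i + 1) - Φ1 i = gam u (i + 1) := h1b i (by omega)
          have g1 : gam u (i + 1) = 1 - u i := gamH' i (hsol2 i (by omega) hi)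
          linarith
      have hle : Φ2 (i + 1) ≤ Φ1 (i + 1) + u i - 1 := by
        have := hEge i; linarith
      rw [max_eq_right hle]; exact key
    · have e0 := hEhigh i (by omega)
      have e1 : Φ1 (i + 1) - Φ1 i = gam u (i + 1) := h1b i (by omega)
      have g1 : gam u (i + 1) = u (i + 1) := gamL' i (hout i (by omega))
      have hlt := hout i (by omega)
      have hle : Φ1 (i + 1) + u i - 1 ≤ Φ2 (i + 1) := by linarith
      rw [max_eq_left hle]; linarith
  · -- Forward
    intro i
    have e : Φ2 i + u i + (1:ℝ) - 1 = Φ2 i + u i := by ring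
    rw [e]
    rcases le_or_gt i l with hi | hi
    · have hEi : Φ1 i - Φ2 (i + 1) = μ := by rw [hElow i hi, hmu]
      have h2rel : Φ2 i - Φ2 (i + 1) = del u i - 1 := h2a i (by omega)
      have hd : del u i ≤ 1 - u i := by unfold del; exact min_le_right _ _
      rw [max_eq_left (by linarith)]; linarith
    · rcases le_or_gt i (l + (s:ℤ) - 1) with hi2 | hi2
      · have h2rel : Φ2 i - Φ2 (i + 1) = del u i - 1 := h2a i (by omega)
        have hd : del u i = 1 - u i := by
          apply delH
          have := hsol2 (i - 1) (by omega) (by omega)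
          simpa using this
        have hle := hEle i
        rw [max_eq_right (by linarith)]; linarith
      · have h2rel : Φ2 (i + 1) - Φ2 i = del u (i + 1) := h2b i (by omega)
        have hd : del u (i + 1) = u i := delL' i (hout i (by omega))
        have e0 := hEhigh i (by omega)
        rw [max_eq_right (by linarith)]; linarith
end

section
/- Assume (AU) with bound N and k = 1, and suppose u has more than one massive soliton in the following sense: there exist integers p < r < q with u p + u (p+1) > 1, u q + u (q+1) > 1, and u r + u (r+1) < 1. Let (l, s) be any soliton of u (case C2), let Φ¹ satisfy the γ-fundamental relations at l and Φ² satisfy the δ-fundamental relations at (l, s). Then there is no μ ∈ ℝ such that the backward constraint and the forward constraint with parameter μ both hold for (Φ¹, Φ²); that is, no pair of fundamental eigenvectors associated with a soliton solves the full ultradiscrete Lax system. -/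
/-- In case C2 with more than one massive soliton (`k = 1`), no pair of
fundamental eigenvectors associated with a soliton solves the full ultradiscrete Lax system:
there is no `μ` for which both the backward and forward constraints hold. -/
theorem stmt_18 (u : ℤ → ℝ) (hu : ∀ i : ℤ, 0 ≤ u i ∧ u i ≤ 1)
    (N : ℕ) (hN : 0 < N) (hAU : ∀ i : ℤ, ((N : ℤ) ≤ i ∨ i ≤ -(N : ℤ)) → u i = 0)
    (k : ℝ) (hk : k = 1)
    (p r q : ℤ) (hpr : p < r) (hrq : r < q)
    (hp : 1 < u p + u (p + 1)) (hq : 1 < u q + u (q + 1)) (hr : u r + u (r + 1) < 1)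
    (l : ℤ) (s : ℕ) (hsol : SolitonC2 u l s)
    (Φ1 Φ2 : ℤ → ℝ) (h1 : FundG u k l Φ1) (h2 : FundD u k l s Φ2) :
    ¬∃ μ : ℝ, Backward u Φ1 Φ2 ∧ Forward u k μ Φ1 Φ2 := by
  rintro ⟨μ, hb, hf⟩
  obtain ⟨hs, hmid, _, _⟩ := hsol
  -- From the backward constraint: u (i-1) + u i ≤ 1 for all i ≤ l
  have hA : ∀ i : ℤ, i ≤ l → u (i - 1) + u i ≤ 1 := by
    intro i hi
    have h := hb i
    have h1i := h1.1 i hi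
    have hge : Φ1 (i + 1) + u i - 1 ≤ Φ1 i := by
      rw [h]; exact le_max_right _ _
    rw [hk] at h1i
    have hgam : u i ≤ gam u i := by linarith
    have := min_le_right (u i) (1 - u (i - 1))
    simp only [gam] at hgam
    linarith
  -- From the forward constraint: u i + u (i+1) ≤ 1 for all i ≥ l + s
  have hB : ∀ i : ℤ, l + (s : ℤ) ≤ i → u i + u (i + 1) ≤ 1 := by
    intro i hi
    have h := hf i
    have h2i := h2.2 i hi
    have hge : Φ2 i + u i + k - 1 ≤ Φ2 (i + 1) := by
      rw [h]; exact le_max_right _ _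
    rw [hk] at hge
    have hdel : u i ≤ del u (i + 1) := by linarith
    simp only [del, add_sub_cancel_right] at hdel
    have := min_le_right (u i) (1 - u (i + 1))
    linarith
  have hpL : l ≤ p := by
    by_contra h
    push_neg at h
    have := hA (p + 1) (by omega)
    simp only [add_sub_cancel_right] at this
    linarith
  have hqR : q ≤ l + (s : ℤ) - 1 := by
    by_contra h
    push_neg at h
    have := hB q (by omega)
    linarith
  have := hmid r (by omega) (by omega)
  linarith
end
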